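/- Completeness of EqFFEL for FFEL: for all closed FEL-terms P and Q, if fe(P) = fe(Q) then EqFFEL ⊢ P = Q. -/
import Mathlib


/-! Shared definitions for left-sequential logics (FEL and SCL),
    evaluation trees, and decompositions. -/

/-- FEL-terms over atoms `A` (`and` = full left-sequential conjunction `∧•`,
    `or` = full left-sequential disjunction `∨•`). -/
inductive FTerm (A : Type) : Type
  | atom : A → FTerm A
  | tru  : FTerm A
  | fls  : FTerm A
  | neg  : FTerm A → FTerm A
  | and  : FTerm A → FTerm A → FTerm A
  | or   : FTerm A → FTerm A → FTerm A

/-- SCL-terms over atoms `A` (`and` = short-circuit conjunction `∧◦`,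
    `or` = short-circuit disjunction `∨◦`). -/
inductive STerm (A : Type) : Type
  | atom : A → STerm A
  | tru  : STerm A
  | fls  : STerm A
  | neg  : STerm A → STerm A
  | and  : STerm A → STerm A → STerm A
  | or   : STerm A → STerm A → STerm A

/-- Evaluation trees: finite binary trees over `A` with leaves `T`, `F`. -/
inductive ETree (A : Type) : Type
  | tru  : ETree A
  | fls  : ETree A
  | node : ETree A → A → ETree A → ETree A

namespace ETree

/-- `X.subst Y Z = X[T↦Y, F↦Z]`. -/
def subst {A : Type} : ETree A → ETree A → ETree A → ETree A
  | .tru, y, _ => y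
  | .fls, _, z => z
  | .node l a r, y, z => .node (subst l y z) a (subst r y z)

def hasTru {A : Type} : ETree A → Prop
  | .tru => True
  | .fls => False
  | .node l _ r => hasTru l ∨ hasTru r

def hasFls {A : Type} : ETree A → Prop
  | .tru => False
  | .fls => True
  | .node l _ r => hasFls l ∨ hasFls r

def depth {A : Type} : ETree A → ℕ
  | .tru => 0
  | .fls => 0
  | .node l _ r => 1 + max (depth l) (depth r)

end ETree

/-- The full evaluation function `fe : FTerm → 𝒯`. -/
def fe {A : Type} : FTerm A → ETree A
  | FTerm.tru => ETree.tru
  | FTerm.fls => ETree.fls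
  | FTerm.atom a => ETree.node ETree.tru a ETree.fls
  | FTerm.neg p => (fe p).subst ETree.fls ETree.tru
  | FTerm.and p q => (fe p).subst (fe q) ((fe q).subst ETree.fls ETree.fls)
  | FTerm.or p q => (fe p).subst ((fe q).subst ETree.tru ETree.tru) (fe q)

/-- The short-circuit evaluation function `se : STerm → 𝒯`. -/
def se {A : Type} : STerm A → ETree A
  | STerm.tru => ETree.tru
  | STerm.fls => ETree.fls
  | STerm.atom a => ETree.node ETree.tru a ETree.fls
  | STerm.neg p => (se p).subst ETree.fls ETree.tru
  | STerm.and p q => (se p).subst (se q) ETree.fls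
  | STerm.or p q => (se p).subst ETree.tru (se q)

/-- Derivability from EqFFEL by equational logic. -/
inductive EqFFEL {A : Type} : FTerm A → FTerm A → Prop
  | refl (p : FTerm A) : EqFFEL p p
  | symm {p q : FTerm A} : EqFFEL p q → EqFFEL q p
  | trans {p q r : FTerm A} : EqFFEL p q → EqFFEL q r → EqFFEL p r
  | neg_congr {p q : FTerm A} : EqFFEL p q → EqFFEL (FTerm.neg p) (FTerm.neg q)
  | and_congr {p p' q q' : FTerm A} :
      EqFFEL p p' → EqFFEL q q' → EqFFEL (FTerm.and p q) (FTerm.and p' q')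
  | or_congr {p p' q q' : FTerm A} :
      EqFFEL p p' → EqFFEL q q' → EqFFEL (FTerm.or p q) (FTerm.or p' q')
  | fel1 : EqFFEL FTerm.fls (FTerm.neg FTerm.tru)
  | fel2 (x y : FTerm A) : EqFFEL (FTerm.or x y) (FTerm.neg (FTerm.and (FTerm.neg x) (FTerm.neg y)))
  | fel3 (x : FTerm A) : EqFFEL (FTerm.neg (FTerm.neg x)) x
  | fel4 (x y z : FTerm A) : EqFFEL (FTerm.and (FTerm.and x y) z) (FTerm.and x (FTerm.and y z))
  | fel5 (x : FTerm A) : EqFFEL (FTerm.and FTerm.tru x) x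
  | fel6 (x : FTerm A) : EqFFEL (FTerm.and x FTerm.tru) x
  | fel7 (x : FTerm A) : EqFFEL (FTerm.and x FTerm.fls) (FTerm.and FTerm.fls x)
  | fel8 (x : FTerm A) : EqFFEL (FTerm.and x FTerm.fls) (FTerm.and (FTerm.neg x) FTerm.fls)
  | fel9 (x y : FTerm A) :
      EqFFEL (FTerm.or (FTerm.and x FTerm.fls) y) (FTerm.and (FTerm.or x FTerm.tru) y)
  | fel10 (x y : FTerm A) :
      EqFFEL (FTerm.or x (FTerm.and y FTerm.fls)) (FTerm.and x (FTerm.or y FTerm.tru))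

/-- Derivability from EqFSCL by equational logic. -/
inductive EqFSCL {A : Type} : STerm A → STerm A → Prop
  | refl (p : STerm A) : EqFSCL p p
  | symm {p q : STerm A} : EqFSCL p q → EqFSCL q p
  | trans {p q r : STerm A} : EqFSCL p q → EqFSCL q r → EqFSCL p r
  | neg_congr {p q : STerm A} : EqFSCL p q → EqFSCL (STerm.neg p) (STerm.neg q)
  | and_congr {p p' q q' : STerm A} :
      EqFSCL p p' → EqFSCL q q' → EqFSCL (STerm.and p q) (STerm.and p' q')
  | or_congr {p p' q q' : STerm A} :
      EqFSCL p p' → EqFSCL q q' → EqFSCL (STerm.or p q) (STerm.or p' q')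
  | scl1 : EqFSCL STerm.fls (STerm.neg STerm.tru)
  | scl2 (x y : STerm A) : EqFSCL (STerm.or x y) (STerm.neg (STerm.and (STerm.neg x) (STerm.neg y)))
  | scl3 (x : STerm A) : EqFSCL (STerm.neg (STerm.neg x)) x
  | scl4 (x y z : STerm A) : EqFSCL (STerm.and (STerm.and x y) z) (STerm.and x (STerm.and y z))
  | scl5 (x : STerm A) : EqFSCL (STerm.and STerm.tru x) x
  | scl6 (x : STerm A) : EqFSCL (STerm.and x STerm.tru) x
  | scl7 (x : STerm A) : EqFSCL (STerm.and STerm.fls x) STerm.fls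
  | scl8 (x : STerm A) : EqFSCL (STerm.and x STerm.fls) (STerm.and (STerm.neg x) STerm.fls)
  | scl9 (x y : STerm A) :
      EqFSCL (STerm.or (STerm.and x STerm.fls) y) (STerm.and (STerm.or x STerm.tru) y)
  | scl10 (x y z : STerm A) :
      EqFSCL (STerm.or (STerm.and x y) (STerm.and z STerm.fls))
             (STerm.and (STerm.or x (STerm.and z STerm.fls)) (STerm.or y (STerm.and z STerm.fls)))

/-! ### FEL Normal Form grammar -/

/-- T-terms: `P^T ::= T | a ∨• P^T`. -/
inductive IsFT_T {A : Type} : FTerm A → Prop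
  | tru : IsFT_T FTerm.tru
  | or (a : A) {p : FTerm A} : IsFT_T p → IsFT_T (FTerm.or (FTerm.atom a) p)

/-- F-terms: `P^F ::= F | a ∧• P^F`. -/
inductive IsFT_F {A : Type} : FTerm A → Prop
  | fls : IsFT_F FTerm.fls
  | and (a : A) {p : FTerm A} : IsFT_F p → IsFT_F (FTerm.and (FTerm.atom a) p)

/-- ℓ-terms: `P^ℓ ::= a ∧• P^T | ¬a ∧• P^T`. -/
inductive IsFT_L {A : Type} : FTerm A → Prop
  | pos (a : A) {p : FTerm A} : IsFT_T p → IsFT_L (FTerm.and (FTerm.atom a) p)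
  | neg (a : A) {p : FTerm A} : IsFT_T p → IsFT_L (FTerm.and (FTerm.neg (FTerm.atom a)) p)

mutual
/-- `P^c ::= P^ℓ | P^* ∧• P^d`. -/
inductive IsFT_C {A : Type} : FTerm A → Prop
  | ell {p : FTerm A} : IsFT_L p → IsFT_C p
  | and {p q : FTerm A} : IsFT_Star p → IsFT_D q → IsFT_C (FTerm.and p q)
/-- `P^d ::= P^ℓ | P^* ∨• P^c`. -/
inductive IsFT_D {A : Type} : FTerm A → Prop
  | ell {p : FTerm A} : IsFT_L p → IsFT_D p
  | or {p q : FTerm A} : IsFT_Star p → IsFT_C q → IsFT_D (FTerm.or p q)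
/-- `P^* ::= P^c | P^d`. -/
inductive IsFT_Star {A : Type} : FTerm A → Prop
  | c {p : FTerm A} : IsFT_C p → IsFT_Star p
  | d {p : FTerm A} : IsFT_D p → IsFT_Star p
end

/-- FEL Normal Form: `P ::= P^T | P^F | P^T ∧• P^*`. -/
inductive IsFNF {A : Type} : FTerm A → Prop
  | t {p : FTerm A} : IsFT_T p → IsFNF p
  | f {p : FTerm A} : IsFT_F p → IsFNF p
  | ts {p q : FTerm A} : IsFT_T p → IsFT_Star q → IsFNF (FTerm.and p q)

/-! ### SCL Normal Form grammar -/

/-- T-terms: `P^T ::= T | (a ∧◦ P^T) ∨◦ P^T`. -/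
inductive IsST_T {A : Type} : STerm A → Prop
  | tru : IsST_T STerm.tru
  | or (a : A) {p q : STerm A} :
      IsST_T p → IsST_T q → IsST_T (STerm.or (STerm.and (STerm.atom a) p) q)

/-- F-terms: `P^F ::= F | (a ∨◦ P^F) ∧◦ P^F`. -/
inductive IsST_F {A : Type} : STerm A → Prop
  | fls : IsST_F STerm.fls
  | and (a : A) {p q : STerm A} :
      IsST_F p → IsST_F q → IsST_F (STerm.and (STerm.or (STerm.atom a) p) q)

/-- ℓ-terms: `P^ℓ ::= (a ∧◦ P^T) ∨◦ P^F | (¬a ∧◦ P^T) ∨◦ P^F`. -/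
inductive IsST_L {A : Type} : STerm A → Prop
  | pos (a : A) {p q : STerm A} :
      IsST_T p → IsST_F q → IsST_L (STerm.or (STerm.and (STerm.atom a) p) q)
  | neg (a : A) {p q : STerm A} :
      IsST_T p → IsST_F q → IsST_L (STerm.or (STerm.and (STerm.neg (STerm.atom a)) p) q)

mutual
/-- `P^c ::= P^ℓ | P^* ∧◦ P^d`. -/
inductive IsST_C {A : Type} : STerm A → Prop
  | ell {p : STerm A} : IsST_L p → IsST_C p
  | and {p q : STerm A} : IsST_Star p → IsST_D q → IsST_C (STerm.and p q)
/-- `P^d ::= P^ℓ | P^* ∨◦ P^c`. -/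
inductive IsST_D {A : Type} : STerm A → Prop
  | ell {p : STerm A} : IsST_L p → IsST_D p
  | or {p q : STerm A} : IsST_Star p → IsST_C q → IsST_D (STerm.or p q)
/-- `P^* ::= P^c | P^d`. -/
inductive IsST_Star {A : Type} : STerm A → Prop
  | c {p : STerm A} : IsST_C p → IsST_Star p
  | d {p : STerm A} : IsST_D p → IsST_Star p
end

/-- SCL Normal Form: `P ::= P^T | P^F | P^T ∧◦ P^*`. -/
inductive IsSNF {A : Type} : STerm A → Prop
  | t {p : STerm A} : IsST_T p → IsSNF p
  | f {p : STerm A} : IsST_F p → IsSNF p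
  | ts {p q : STerm A} : IsST_T p → IsST_Star q → IsSNF (STerm.and p q)

/-! ### Trees with box leaves -/

/-- `𝒯_□`: trees over `A` with leaves in `{T, F, □}`. -/
inductive ETreeB (A : Type) : Type
  | tru  : ETreeB A
  | fls  : ETreeB A
  | box  : ETreeB A
  | node : ETreeB A → A → ETreeB A → ETreeB A

namespace ETreeB

/-- `X.substBox Y = X[□↦Y]`. -/
def substBox {A : Type} : ETreeB A → ETree A → ETree A
  | .tru, _ => ETree.tru
  | .fls, _ => ETree.fls
  | .box, y => y
  | .node l a r, y => ETree.node (substBox l y) a (substBox r y)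

def hasBox {A : Type} : ETreeB A → Prop
  | .tru => False
  | .fls => False
  | .box => True
  | .node l _ r => hasBox l ∨ hasBox r

def hasTru {A : Type} : ETreeB A → Prop
  | .tru => True
  | .fls => False
  | .box => False
  | .node l _ r => hasTru l ∨ hasTru r

def hasFls {A : Type} : ETreeB A → Prop
  | .tru => False
  | .fls => True
  | .box => False
  | .node l _ r => hasFls l ∨ hasFls r

end ETreeB

/-- `𝒯_{1,2}`: trees over `A` with leaves in `{T, F, □₁, □₂}`. -/
inductive ETree2 (A : Type) : Type
  | tru  : ETree2 A
  | fls  : ETree2 A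
  | box1 : ETree2 A
  | box2 : ETree2 A
  | node : ETree2 A → A → ETree2 A → ETree2 A

namespace ETree2

/-- `X.substBoxes Y Z = X[□₁↦Y, □₂↦Z]`. -/
def substBoxes {A : Type} : ETree2 A → ETree A → ETree A → ETree A
  | .tru, _, _ => ETree.tru
  | .fls, _, _ => ETree.fls
  | .box1, y, _ => y
  | .box2, _, z => z
  | .node l a r, y, z => ETree.node (substBoxes l y z) a (substBoxes r y z)

def hasBox1 {A : Type} : ETree2 A → Prop
  | .tru => False
  | .fls => False
  | .box1 => True
  | .box2 => False
  | .node l _ r => hasBox1 l ∨ hasBox1 r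

def hasBox2 {A : Type} : ETree2 A → Prop
  | .tru => False
  | .fls => False
  | .box1 => False
  | .box2 => True
  | .node l _ r => hasBox2 l ∨ hasBox2 r

def hasTru {A : Type} : ETree2 A → Prop
  | .tru => True
  | .fls => False
  | .box1 => False
  | .box2 => False
  | .node l _ r => hasTru l ∨ hasTru r

def hasFls {A : Type} : ETree2 A → Prop
  | .tru => False
  | .fls => True
  | .box1 => False
  | .box2 => False
  | .node l _ r => hasFls l ∨ hasFls r

end ETree2

namespace ETree

/-- `X[T↦□₁, F↦□₂]`. -/
def toBoxes {A : Type} : ETree A → ETree2 A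
  | .tru => ETree2.box1
  | .fls => ETree2.box2
  | .node l a r => ETree2.node (toBoxes l) a (toBoxes r)

/-- `X[T↦□]`. -/
def truToBox {A : Type} : ETree A → ETreeB A
  | .tru => ETreeB.box
  | .fls => ETreeB.fls
  | .node l a r => ETreeB.node (truToBox l) a (truToBox r)

/-- `X[F↦□]`. -/
def flsToBox {A : Type} : ETree A → ETreeB A
  | .tru => ETreeB.tru
  | .fls => ETreeB.box
  | .node l a r => ETreeB.node (flsToBox l) a (flsToBox r)

end ETree

/-! ### FEL decompositions -/

/-- Candidate conjunction decomposition (FEL):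
    `X = Y[□₁↦Z, □₂↦Z[T↦F]]`, `Y` contains both boxes, neither `T` nor `F`,
    and `Z` contains both `T` and `F`. -/
def IsCcdF {A : Type} (X : ETree A) (Y : ETree2 A) (Z : ETree A) : Prop :=
  X = Y.substBoxes Z (Z.subst ETree.fls ETree.fls) ∧
  Y.hasBox1 ∧ Y.hasBox2 ∧ ¬ Y.hasTru ∧ ¬ Y.hasFls ∧ Z.hasTru ∧ Z.hasFls

/-- Candidate disjunction decomposition (FEL):
    `X = Y[□₁↦Z[F↦T], □₂↦Z]` with the same side conditions. -/
def IsCddF {A : Type} (X : ETree A) (Y : ETree2 A) (Z : ETree A) : Prop :=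
  X = Y.substBoxes (Z.subst ETree.tru ETree.tru) Z ∧
  Y.hasBox1 ∧ Y.hasBox2 ∧ ¬ Y.hasTru ∧ ¬ Y.hasFls ∧ Z.hasTru ∧ Z.hasFls

/-- Conjunction decomposition (FEL): a ccd with `Z` of minimal depth. -/
def IsCdF {A : Type} (X : ETree A) (Y : ETree2 A) (Z : ETree A) : Prop :=
  IsCcdF X Y Z ∧ ∀ (Y' : ETree2 A) (Z' : ETree A), IsCcdF X Y' Z' → Z.depth ≤ Z'.depth

/-- Disjunction decomposition (FEL): a cdd with `Z` of minimal depth. -/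
def IsDdF {A : Type} (X : ETree A) (Y : ETree2 A) (Z : ETree A) : Prop :=
  IsCddF X Y Z ∧ ∀ (Y' : ETree2 A) (Z' : ETree A), IsCddF X Y' Z' → Z.depth ≤ Z'.depth

/-- T-*-decomposition (FEL): `X = Y[□↦Z]`, `Y` contains neither `T` nor `F`,
    and `Z` admits no nontrivial box decomposition. -/
def IsTsdF {A : Type} (X : ETree A) (Y : ETreeB A) (Z : ETree A) : Prop :=
  X = Y.substBox Z ∧ ¬ Y.hasTru ∧ ¬ Y.hasFls ∧
  ¬ ∃ (U : ETreeB A) (V : ETree A),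
      Z = U.substBox V ∧ U.hasBox ∧ U ≠ ETreeB.box ∧ ¬ U.hasTru ∧ ¬ U.hasFls

/-! ### SCL decompositions -/

/-- Candidate conjunction decomposition (SCL): `X = Y[□↦Z]`, `Y` contains `□`,
    `Y` contains `F` but not `T`, and `Z` contains both `T` and `F`. -/
def IsCcdS {A : Type} (X : ETree A) (Y : ETreeB A) (Z : ETree A) : Prop :=
  X = Y.substBox Z ∧ Y.hasBox ∧ Y.hasFls ∧ ¬ Y.hasTru ∧ Z.hasTru ∧ Z.hasFls

/-- Candidate disjunction decomposition (SCL): `X = Y[□↦Z]`, `Y` contains `□`,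
    `Y` contains `T` but not `F`, and `Z` contains both `T` and `F`. -/
def IsCddS {A : Type} (X : ETree A) (Y : ETreeB A) (Z : ETree A) : Prop :=
  X = Y.substBox Z ∧ Y.hasBox ∧ Y.hasTru ∧ ¬ Y.hasFls ∧ Z.hasTru ∧ Z.hasFls

/-- Conjunction decomposition (SCL): a ccd with `Z` of minimal depth. -/
def IsCdS {A : Type} (X : ETree A) (Y : ETreeB A) (Z : ETree A) : Prop :=
  IsCcdS X Y Z ∧ ∀ (Y' : ETreeB A) (Z' : ETree A), IsCcdS X Y' Z' → Z.depth ≤ Z'.depth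

/-- Disjunction decomposition (SCL): a cdd with `Z` of minimal depth. -/
def IsDdS {A : Type} (X : ETree A) (Y : ETreeB A) (Z : ETree A) : Prop :=
  IsCddS X Y Z ∧ ∀ (Y' : ETreeB A) (Z' : ETree A), IsCddS X Y' Z' → Z.depth ≤ Z'.depth

/-- Candidate T-*-decomposition (SCL). -/
def IsCtsdS {A : Type} (X : ETree A) (Y : ETreeB A) (Z : ETree A) : Prop :=
  X = Y.substBox Z ∧ ¬ Y.hasTru ∧ ¬ Y.hasFls ∧
  ¬ ∃ (U : ETreeB A) (V : ETree A),
      Z = U.substBox V ∧ U.hasBox ∧ U ≠ ETreeB.box ∧ ¬ U.hasTru ∧ ¬ U.hasFls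

/-- T-*-decomposition (SCL): a ctsd with `Z` of minimal depth. -/
def IsTsdS {A : Type} (X : ETree A) (Y : ETreeB A) (Z : ETree A) : Prop :=
  IsCtsdS X Y Z ∧ ∀ (Y' : ETreeB A) (Z' : ETree A), IsCtsdS X Y' Z' → Z.depth ≤ Z'.depth

/-- The translation `h : FTerm → STerm` from FEL-terms to SCL-terms. -/
def hTrans {A : Type} : FTerm A → STerm A
  | FTerm.tru => STerm.tru
  | FTerm.fls => STerm.fls
  | FTerm.atom a => STerm.atom a
  | FTerm.neg p => STerm.neg (hTrans p)
  | FTerm.and p q => STerm.and (STerm.or (hTrans p) (STerm.and (hTrans q) STerm.fls)) (hTrans q)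
  | FTerm.or p q => STerm.or (STerm.and (hTrans p) (STerm.or (hTrans q) STerm.tru)) (hTrans q)

/-! ### Auxiliary development for the completeness proof -/

namespace FFELAux

open ETree

variable {A : Type}

/-! #### Tree infrastructure -/

@[simp] lemma subst_tru (Y Z : ETree A) : ETree.subst .tru Y Z = Y := rfl
@[simp] lemma subst_fls (Y Z : ETree A) : ETree.subst .fls Y Z = Z := rfl
@[simp] lemma subst_node (l : ETree A) (a : A) (r Y Z : ETree A) :
    ETree.subst (.node l a r) Y Z = .node (l.subst Y Z) a (r.subst Y Z) := rfl

lemma subst_subst (X a b c d : ETree A) :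
    (X.subst a b).subst c d = X.subst (a.subst c d) (b.subst c d) := by
  induction X with
  | tru => rfl
  | fls => rfl
  | node l x r ihl ihr => simp [ihl, ihr]

@[simp] lemma subst_id (X : ETree A) : X.subst .tru .fls = X := by
  induction X with
  | tru => rfl
  | fls => rfl
  | node l x r ihl ihr => simp [ihl, ihr]

@[simp] lemma hasTru_tru : (ETree.tru (A := A)).hasTru := trivial
@[simp] lemma not_hasTru_fls : ¬ (ETree.fls (A := A)).hasTru := fun h => h
@[simp] lemma hasFls_fls : (ETree.fls (A := A)).hasFls := trivial
@[simp] lemma not_hasFls_tru : ¬ (ETree.tru (A := A)).hasFls := fun h => h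
@[simp] lemma hasTru_node (l : ETree A) (a : A) (r : ETree A) :
    (ETree.node l a r).hasTru ↔ l.hasTru ∨ r.hasTru := Iff.rfl
@[simp] lemma hasFls_node (l : ETree A) (a : A) (r : ETree A) :
    (ETree.node l a r).hasFls ↔ l.hasFls ∨ r.hasFls := Iff.rfl

lemma total (X : ETree A) : X.hasTru ∨ X.hasFls := by
  induction X with
  | tru => exact Or.inl trivial
  | fls => exact Or.inr trivial
  | node l a r ihl ihr =>
      rcases ihl with h | h
      · exact Or.inl (Or.inl h)
      · exact Or.inr (Or.inl h)

lemma hasTru_subst (Y U V : ETree A) :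
    (Y.subst U V).hasTru ↔ (Y.hasTru ∧ U.hasTru) ∨ (Y.hasFls ∧ V.hasTru) := by
  induction Y with
  | tru => simp
  | fls => simp
  | node l a r ihl ihr => simp [ihl, ihr]; tauto

lemma hasFls_subst (Y U V : ETree A) :
    (Y.subst U V).hasFls ↔ (Y.hasTru ∧ U.hasFls) ∨ (Y.hasFls ∧ V.hasFls) := by
  induction Y with
  | tru => simp
  | fls => simp
  | node l a r ihl ihr => simp [ihl, ihr]; tauto

lemma hasFls_subst_of (Y U V : ETree A) (hU : U.hasFls) (hV : V.hasFls) :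
    (Y.subst U V).hasFls := by
  rw [hasFls_subst]; rcases total Y with h | h
  · exact Or.inl ⟨h, hU⟩
  · exact Or.inr ⟨h, hV⟩

lemma hasTru_subst_of (Y U V : ETree A) (hU : U.hasTru) (hV : V.hasTru) :
    (Y.subst U V).hasTru := by
  rw [hasTru_subst]; rcases total Y with h | h
  · exact Or.inl ⟨h, hU⟩
  · exact Or.inr ⟨h, hV⟩

@[simp] lemma depth_tru : (ETree.tru (A := A)).depth = 0 := rfl
@[simp] lemma depth_fls : (ETree.fls (A := A)).depth = 0 := rfl
@[simp] lemma depth_node (l : ETree A) (a : A) (r : ETree A) :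
    (ETree.node l a r).depth = 1 + max l.depth r.depth := rfl

lemma depth_subst (Y U V : ETree A) (h : U.depth = V.depth) :
    (Y.subst U V).depth = Y.depth + U.depth := by
  induction Y with
  | tru => simp
  | fls => simp [h]
  | node l a r ihl ihr =>
      simp [ihl, ihr]
      omega

/-- `S` occurs as a subtree of `X`. -/
def Occ : ETree A → ETree A → Prop
  | .node l a r, S => S = .node l a r ∨ Occ l S ∨ Occ r S
  | X, S => S = X

@[simp] lemma occ_tru (S : ETree A) : Occ .tru S ↔ S = .tru := Iff.rfl
@[simp] lemma occ_fls (S : ETree A) : Occ .fls S ↔ S = .fls := Iff.rfl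
@[simp] lemma occ_node (l : ETree A) (a : A) (r S : ETree A) :
    Occ (.node l a r) S ↔ S = .node l a r ∨ Occ l S ∨ Occ r S := Iff.rfl

lemma occ_refl (X : ETree A) : Occ X X := by
  cases X with
  | tru => rfl
  | fls => rfl
  | node l a r => exact Or.inl rfl

lemma occ_depth_le {X S : ETree A} (h : Occ X S) : S.depth ≤ X.depth := by
  induction X with
  | tru => rw [occ_tru] at h; subst h; rfl
  | fls => rw [occ_fls] at h; subst h; rfl
  | node l a r ihl ihr =>
      rcases h with h | h | h
      · subst h; rfl
      · have := ihl h; simp; omega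
      · have := ihr h; simp; omega

lemma occ_hasFls {X S : ETree A} (h : Occ X S) (hS : S.hasFls) : X.hasFls := by
  induction X with
  | tru => rw [occ_tru] at h; subst h; exact hS
  | fls => trivial
  | node l a r ihl ihr =>
      rcases h with h | h | h
      · subst h; exact hS
      · exact Or.inl (ihl h)
      · exact Or.inr (ihr h)

lemma occ_hasTru {X S : ETree A} (h : Occ X S) (hS : S.hasTru) : X.hasTru := by
  induction X with
  | tru => trivial
  | fls => rw [occ_fls] at h; subst h; exact hS
  | node l a r ihl ihr =>
      rcases h with h | h | h
      · subst h; exact hS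
      · exact Or.inl (ihl h)
      · exact Or.inr (ihr h)

/-- Replace all leaves by `tru` (skeleton of a tree). -/
def erase (X : ETree A) : ETree A := X.subst .tru .tru

/-- Uniform trees: both children of any node have the same skeleton. -/
def Unif : ETree A → Prop
  | .tru => True
  | .fls => True
  | .node l _ r => Unif l ∧ Unif r ∧ erase l = erase r

@[simp] lemma unif_tru : Unif (ETree.tru (A := A)) := trivial
@[simp] lemma unif_fls : Unif (ETree.fls (A := A)) := trivial
@[simp] lemma unif_node (l : ETree A) (a : A) (r : ETree A) :
    Unif (.node l a r) ↔ Unif l ∧ Unif r ∧ erase l = erase r := Iff.rfl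

lemma depth_erase (X : ETree A) : (erase X).depth = X.depth := by
  unfold erase; rw [depth_subst _ _ _ rfl]; simp

lemma erase_subst (X U V : ETree A) (h : erase U = erase V) :
    erase (X.subst U V) = X.subst (erase U) (erase U) := by
  unfold erase at *
  rw [subst_subst, ← h]

lemma subst_same_of_erase_eq {L R : ETree A} (h : erase L = erase R) (E : ETree A) :
    L.subst E E = R.subst E E := by
  have hL : L.subst E E = (erase L).subst E E := by
    unfold erase; rw [subst_subst]; rfl
  have hR : R.subst E E = (erase R).subst E E := by
    unfold erase; rw [subst_subst]; rfl
  rw [hL, hR, h]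

lemma unif_subst {Y U V : ETree A} (hY : Unif Y) (hU : Unif U) (hV : Unif V)
    (hUV : erase U = erase V) : Unif (Y.subst U V) := by
  induction Y with
  | tru => exact hU
  | fls => exact hV
  | node l a r ihl ihr =>
      obtain ⟨h1, h2, h3⟩ := hY
      refine ⟨ihl h1, ihr h2, ?_⟩
      rw [erase_subst _ _ _ hUV, erase_subst _ _ _ hUV]
      exact subst_same_of_erase_eq h3 (erase U)

lemma occ_unif {X S : ETree A} (h : Occ X S) (hX : Unif X) : Unif S := by
  induction X with
  | tru => rw [occ_tru] at h; subst h; trivial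
  | fls => rw [occ_fls] at h; subst h; trivial
  | node l a r ihl ihr =>
      rcases h with h | h | h
      · subst h; exact hX
      · exact ihl h hX.1
      · exact ihr h hX.2.1

/-- In a uniform tree, a subtree of full depth is the whole tree. -/
lemma occ_depth_eq {X S : ETree A} (hX : Unif X) (h : Occ X S)
    (hd : S.depth = X.depth) : S = X := by
  induction X with
  | tru => exact h
  | fls => exact h
  | node l a r ihl ihr =>
      rcases h with h | h | h
      · exact h
      · exfalso
        have h1 := occ_depth_le h
        have : l.depth ≤ max l.depth r.depth := le_max_left _ _
        simp at hd; omega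
      · exfalso
        have h1 := occ_depth_le h
        have : r.depth ≤ max l.depth r.depth := le_max_right _ _
        simp at hd; omega

/-- Leaf occurrences: a T-leaf yields an occurrence of `U`. -/
lemma occ_subst_of_hasTru {Y : ETree A} (U V : ETree A) (h : Y.hasTru) :
    Occ (Y.subst U V) U := by
  induction Y with
  | tru => exact occ_refl U
  | fls => exact absurd h (by simp)
  | node l a r ihl ihr =>
      rcases h with h | h
      · exact Or.inr (Or.inl (ihl h))
      · exact Or.inr (Or.inr (ihr h))

lemma occ_subst_of_hasFls {Y : ETree A} (U V : ETree A) (h : Y.hasFls) :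
    Occ (Y.subst U V) V := by
  induction Y with
  | tru => exact absurd h (by simp)
  | fls => exact occ_refl V
  | node l a r ihl ihr =>
      rcases h with h | h
      · exact Or.inr (Or.inl (ihl h))
      · exact Or.inr (Or.inr (ihr h))

/-- Occurrences of the level depth are exactly the substituted trees. -/
lemma occ_subst_level {Y U V S : ETree A} (hUV : U.depth = V.depth)
    (hU : Unif U) (hV : Unif V)
    (h : Occ (Y.subst U V) S) (hd : S.depth = U.depth) : S = U ∨ S = V := by
  induction Y with
  | tru => exact Or.inl (occ_depth_eq hU h hd)
  | fls => exact Or.inr (occ_depth_eq hV h (hd.trans hUV))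
  | node l a r ihl ihr =>
      rcases h with h | h | h
      · exfalso
        subst h
        have h2 : (l.subst U V).depth = l.depth + U.depth := depth_subst _ _ _ hUV
        simp at hd
        omega
      · exact ihl h
      · exact ihr h

/-- Occurrences strictly above the level are substitutions of subtrees. -/
lemma occ_subst_above {Y U V S : ETree A} (hUV : U.depth = V.depth)
    (h : Occ (Y.subst U V) S) (hd : U.depth < S.depth) :
    ∃ Y', Occ Y Y' ∧ (∃ l b r, Y' = ETree.node l b r) ∧ S = Y'.subst U V := by
  induction Y with
  | tru =>
      exfalso
      simp at h
      exact absurd hd (not_lt.mpr (occ_depth_le h))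
  | fls =>
      exfalso
      simp at h
      have := occ_depth_le h
      omega
  | node l a r ihl ihr =>
      rcases h with h | h | h
      · exact ⟨.node l a r, occ_refl _, ⟨l, a, r, rfl⟩, h⟩
      · obtain ⟨Y', h1, h2, h3⟩ := ihl h
        exact ⟨Y', Or.inr (Or.inl h1), h2, h3⟩
      · obtain ⟨Y', h1, h2, h3⟩ := ihr h
        exact ⟨Y', Or.inr (Or.inr h1), h2, h3⟩

/-- Occurrences at or below the level occur inside `U` or `V`. -/
lemma occ_subst_below {Y U V S : ETree A} (hUV : U.depth = V.depth)
    (h : Occ (Y.subst U V) S) (hd : S.depth ≤ U.depth) : Occ U S ∨ Occ V S := by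
  induction Y with
  | tru => exact Or.inl h
  | fls => exact Or.inr h
  | node l a r ihl ihr =>
      rcases h with h | h | h
      · exfalso
        subst h
        have h2 : (l.subst U V).depth = l.depth + U.depth := depth_subst _ _ _ hUV
        simp at hd
        omega
      · exact ihl h
      · exact ihr h

/-- Cancellation: substitution with distinct pieces is injective in the context. -/
lemma subst_cancel {S1 S2 U V : ETree A} (hUV : U.depth = V.depth) (hne : U ≠ V)
    (h : S1.subst U V = S2.subst U V) : S1 = S2 := by
  induction S1 generalizing S2 with
  | tru =>
      cases S2 with
      | tru => rfl
      | fls => exact absurd h hne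
      | node l a r =>
          exfalso
          simp at h
          have h2 : (l.subst U V).depth = l.depth + U.depth := depth_subst _ _ _ hUV
          have h3 := congrArg ETree.depth h
          simp at h3
          omega
  | fls =>
      cases S2 with
      | tru => exact absurd h.symm hne
      | fls => rfl
      | node l a r =>
          exfalso
          simp at h
          have h2 : (l.subst U V).depth = l.depth + U.depth := depth_subst _ _ _ hUV
          have h3 := congrArg ETree.depth h
          simp at h3
          omega
  | node l a r ihl ihr =>
      cases S2 with
      | tru =>
          exfalso
          simp at h
          have h2 : (l.subst U V).depth = l.depth + U.depth := depth_subst _ _ _ hUV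
          have h3 := congrArg ETree.depth h
          simp at h3
          omega
      | fls =>
          exfalso
          simp at h
          have h2 : (l.subst U V).depth = l.depth + U.depth := depth_subst _ _ _ hUV
          have h3 := congrArg ETree.depth h
          simp at h3
          omega
      | node l2 a2 r2 =>
          simp at h
          obtain ⟨h1, h2, h3⟩ := h
          rw [ihl h1, h2, ihr h3]

/-! #### Perfect all-true / all-false trees -/

def allT : List A → ETree A
  | [] => .tru
  | a :: w => .node (allT w) a (allT w)

def allF : List A → ETree A
  | [] => .fls
  | a :: w => .node (allF w) a (allF w)

@[simp] lemma allT_nil : allT ([] : List A) = .tru := rfl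
@[simp] lemma allT_cons (a : A) (w : List A) :
    allT (a :: w) = .node (allT w) a (allT w) := rfl
@[simp] lemma allF_nil : allF ([] : List A) = .fls := rfl
@[simp] lemma allF_cons (a : A) (w : List A) :
    allF (a :: w) = .node (allF w) a (allF w) := rfl

lemma allT_hasTru (w : List A) : (allT w).hasTru := by
  induction w with
  | nil => trivial
  | cons a w ih => exact Or.inl ih

lemma allT_not_hasFls (w : List A) : ¬ (allT w).hasFls := by
  induction w with
  | nil => simp
  | cons a w ih => simp [ih]

lemma allF_hasFls (w : List A) : (allF w).hasFls := by
  induction w with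
  | nil => trivial
  | cons a w ih => exact Or.inl ih

lemma allF_not_hasTru (w : List A) : ¬ (allF w).hasTru := by
  induction w with
  | nil => simp
  | cons a w ih => simp [ih]

lemma allT_inj {w v : List A} (h : allT w = allT v) : w = v := by
  induction w generalizing v with
  | nil => cases v with
    | nil => rfl
    | cons b v => exact absurd h (by simp)
  | cons a w ih =>
      cases v with
      | nil => exact absurd h (by simp)
      | cons b v =>
          simp at h
          rw [h.2.1, ih h.1]

lemma allF_inj {w v : List A} (h : allF w = allF v) : w = v := by
  induction w generalizing v with
  | nil => cases v with
    | nil => rfl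
    | cons b v => exact absurd h (by simp)
  | cons a w ih =>
      cases v with
      | nil => exact absurd h (by simp)
      | cons b v =>
          simp at h
          rw [h.2.1, ih h.1]

lemma unif_allT (w : List A) : Unif (allT w) := by
  induction w with
  | nil => trivial
  | cons a w ih => exact ⟨ih, ih, rfl⟩

lemma unif_allF (w : List A) : Unif (allF w) := by
  induction w with
  | nil => trivial
  | cons a w ih => exact ⟨ih, ih, rfl⟩

lemma erase_allT (w : List A) : erase (allT w) = allT w := by
  induction w with
  | nil => rfl
  | cons a w ih =>
      simp only [allT_cons, erase, subst_node]
      unfold erase at ih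
      rw [ih]

lemma erase_allF (w : List A) : erase (allF w) = allT w := by
  induction w with
  | nil => rfl
  | cons a w ih =>
      simp only [allF_cons, allT_cons, erase, subst_node]
      unfold erase at ih
      rw [ih]

lemma depth_allT (w : List A) : (allT w).depth = w.length := by
  induction w with
  | nil => rfl
  | cons a w ih => simp [ih]; omega

/-- A uniform tree without F-leaves is a perfect all-true tree. -/
lemma unif_allT_of_not_hasFls {Y : ETree A} (hY : Unif Y) (h : ¬ Y.hasFls) :
    ∃ w, Y = allT w := by
  induction Y with
  | tru => exact ⟨[], rfl⟩
  | fls => exact absurd trivial h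
  | node l a r ihl ihr =>
      simp at h
      obtain ⟨h1, h2, h3⟩ := hY
      obtain ⟨wl, hl⟩ := ihl h1 h.1
      obtain ⟨wr, hr⟩ := ihr h2 h.2
      subst hl; subst hr
      rw [erase_allT, erase_allT] at h3
      rw [allT_inj h3]
      exact ⟨a :: wr, rfl⟩

lemma unif_allF_of_not_hasTru {Y : ETree A} (hY : Unif Y) (h : ¬ Y.hasTru) :
    ∃ w, Y = allF w := by
  induction Y with
  | tru => exact absurd trivial h
  | fls => exact ⟨[], rfl⟩
  | node l a r ihl ihr =>
      simp at h
      obtain ⟨h1, h2, h3⟩ := hY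
      obtain ⟨wl, hl⟩ := ihl h1 h.1
      obtain ⟨wr, hr⟩ := ihr h2 h.2
      subst hl; subst hr
      rw [erase_allF, erase_allF] at h3
      rw [allT_inj h3]
      exact ⟨a :: wr, rfl⟩

lemma subst_allT (w : List A) (U V : ETree A) :
    (allT w).subst U V = (allT w).subst U U := by
  induction w with
  | nil => rfl
  | cons a w ih => simp [ih]

lemma subst_allF (w : List A) (U V : ETree A) :
    (allF w).subst U V = (allF w).subst V V := by
  induction w with
  | nil => rfl
  | cons a w ih => simp [ih]

/-! #### Equational toolkit for EqFFEL -/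

instance : Trans (EqFFEL (A := A)) (EqFFEL (A := A)) (EqFFEL (A := A)) :=
  ⟨EqFFEL.trans⟩

open FTerm EqFFEL

local infixl:65 " ⋏ " => FTerm.and
local infixl:60 " ⋎ " => FTerm.or
local prefix:max "∼" => FTerm.neg
local infix:50 " ≋ " => EqFFEL

lemma negT : (∼tru : FTerm A) ≋ fls := fel1.symm

lemma negF : (∼fls : FTerm A) ≋ tru :=
  calc (∼fls : FTerm A) ≋ ∼∼tru := neg_congr fel1
    _ ≋ tru := fel3 tru

lemma dmOr (x y : FTerm A) : ∼(x ⋏ y) ≋ ∼x ⋎ ∼y :=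
  (calc ∼x ⋎ ∼y ≋ ∼(∼∼x ⋏ ∼∼y) := fel2 _ _
    _ ≋ ∼(x ⋏ y) := neg_congr (and_congr (fel3 x) (fel3 y))).symm

lemma dmAnd (x y : FTerm A) : ∼(x ⋎ y) ≋ ∼x ⋏ ∼y :=
  calc ∼(x ⋎ y) ≋ ∼∼(∼x ⋏ ∼y) := neg_congr (fel2 x y)
    _ ≋ ∼x ⋏ ∼y := fel3 _

lemma orAssoc (x y z : FTerm A) : (x ⋎ y) ⋎ z ≋ x ⋎ (y ⋎ z) :=
  calc (x ⋎ y) ⋎ z ≋ ∼(∼(x ⋎ y) ⋏ ∼z) := fel2 _ _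
    _ ≋ ∼((∼x ⋏ ∼y) ⋏ ∼z) := neg_congr (and_congr (dmAnd x y) (refl _))
    _ ≋ ∼(∼x ⋏ (∼y ⋏ ∼z)) := neg_congr (fel4 _ _ _)
    _ ≋ ∼(∼x ⋏ ∼(y ⋎ z)) := neg_congr (and_congr (refl _) (dmAnd y z).symm)
    _ ≋ x ⋎ (y ⋎ z) := (fel2 _ _).symm

lemma lemTF : (tru ⋏ fls : FTerm A) ≋ fls := fel5 fls

lemma lemFF : (fls ⋏ fls : FTerm A) ≋ fls :=
  calc (fls ⋏ fls : FTerm A) ≋ ∼tru ⋏ fls := and_congr fel1 (refl _)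
    _ ≋ tru ⋏ fls := (fel8 tru).symm
    _ ≋ fls := fel5 fls

lemma ps1 (x y : FTerm A) : x ⋏ (y ⋏ fls) ≋ ∼x ⋏ (y ⋏ fls) :=
  calc x ⋏ (y ⋏ fls) ≋ x ⋏ (fls ⋏ y) := and_congr (refl _) (fel7 y)
    _ ≋ (x ⋏ fls) ⋏ y := (fel4 _ _ _).symm
    _ ≋ (∼x ⋏ fls) ⋏ y := and_congr (fel8 x) (refl _)
    _ ≋ ∼x ⋏ (fls ⋏ y) := fel4 _ _ _
    _ ≋ ∼x ⋏ (y ⋏ fls) := and_congr (refl _) (fel7 y).symm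

/-! word denotations -/

def wT : List A → FTerm A
  | [] => tru
  | a :: w => atom a ⋎ wT w

def wF : List A → FTerm A
  | [] => fls
  | a :: w => atom a ⋏ wF w

def tcar : List A → FTerm A
  | [] => fls
  | a :: w => atom a ⋎ tcar w

def fcar : List A → FTerm A
  | [] => tru
  | a :: w => atom a ⋏ fcar w

/-- The word of atoms of a term, in evaluation order. -/
def aw : FTerm A → List A
  | .atom a => [a]
  | .tru => []
  | .fls => []
  | .neg x => aw x
  | .and x y => aw x ++ aw y
  | .or x y => aw x ++ aw y

@[simp] lemma aw_tcar (w : List A) : aw (tcar w) = w := by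
  induction w with
  | nil => rfl
  | cons a w ih => simp [tcar, aw, ih]

@[simp] lemma aw_fcar (w : List A) : aw (fcar w) = w := by
  induction w with
  | nil => rfl
  | cons a w ih => simp [fcar, aw, ih]

@[simp] lemma aw_wT (w : List A) : aw (wT w) = w := by
  induction w with
  | nil => rfl
  | cons a w ih => simp [wT, aw, ih]

@[simp] lemma aw_wF (w : List A) : aw (wF w) = w := by
  induction w with
  | nil => rfl
  | cons a w ih => simp [wF, aw, ih]

lemma ffact (v : List A) : wF v ≋ fcar v ⋏ fls := by
  induction v with
  | nil => exact lemTF.symm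
  | cons a v ih =>
      calc atom a ⋏ wF v ≋ atom a ⋏ (fcar v ⋏ fls) := and_congr (refl _) ih
        _ ≋ (atom a ⋏ fcar v) ⋏ fls := (fel4 _ _ _).symm

lemma gf8 (x : FTerm A) (v : List A) : x ⋏ wF v ≋ ∼x ⋏ wF v :=
  calc x ⋏ wF v ≋ x ⋏ (fcar v ⋏ fls) := and_congr (refl _) (ffact v)
    _ ≋ ∼x ⋏ (fcar v ⋏ fls) := ps1 _ _
    _ ≋ ∼x ⋏ wF v := and_congr (refl _) (ffact v).symm

lemma k0 (x y q : FTerm A) : (x ⋎ y) ⋏ (q ⋏ fls) ≋ (x ⋏ y) ⋏ (q ⋏ fls) :=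
  calc (x ⋎ y) ⋏ (q ⋏ fls) ≋ ∼(∼x ⋏ ∼y) ⋏ (q ⋏ fls) := and_congr (fel2 x y) (refl _)
    _ ≋ (∼x ⋏ ∼y) ⋏ (q ⋏ fls) := (ps1 _ _).symm
    _ ≋ ∼x ⋏ (∼y ⋏ (q ⋏ fls)) := fel4 _ _ _
    _ ≋ ∼x ⋏ (y ⋏ (q ⋏ fls)) := and_congr (refl _) (ps1 y q).symm
    _ ≋ ∼x ⋏ ((y ⋏ q) ⋏ fls) := and_congr (refl _) (fel4 _ _ _).symm
    _ ≋ x ⋏ ((y ⋏ q) ⋏ fls) := (ps1 x _).symm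
    _ ≋ x ⋏ (y ⋏ (q ⋏ fls)) := and_congr (refl _) (fel4 _ _ _)
    _ ≋ (x ⋏ y) ⋏ (q ⋏ fls) := (fel4 _ _ _).symm

lemma lemK (x y : FTerm A) (v : List A) : (x ⋎ y) ⋏ wF v ≋ (x ⋏ y) ⋏ wF v :=
  calc (x ⋎ y) ⋏ wF v ≋ (x ⋎ y) ⋏ (fcar v ⋏ fls) := and_congr (refl _) (ffact v)
    _ ≋ (x ⋏ y) ⋏ (fcar v ⋏ fls) := k0 x y _
    _ ≋ (x ⋏ y) ⋏ wF v := and_congr (refl _) (ffact v).symm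

lemma fwd (x : FTerm A) (v : List A) : x ⋏ wF v ≋ wF (aw x ++ v) := by
  induction x generalizing v with
  | atom a => exact refl _
  | tru => exact fel5 _
  | fls =>
      calc (fls ⋏ wF v : FTerm A) ≋ fls ⋏ (fcar v ⋏ fls) := and_congr (refl _) (ffact v)
        _ ≋ (fls ⋏ fcar v) ⋏ fls := (fel4 _ _ _).symm
        _ ≋ (fcar v ⋏ fls) ⋏ fls := and_congr (fel7 _).symm (refl _)
        _ ≋ fcar v ⋏ (fls ⋏ fls) := fel4 _ _ _
        _ ≋ fcar v ⋏ fls := and_congr (refl _) lemFF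
        _ ≋ wF v := (ffact v).symm
  | neg x ih =>
      calc ∼x ⋏ wF v ≋ x ⋏ wF v := (gf8 x v).symm
        _ ≋ wF (aw x ++ v) := ih v
  | and x y ihx ihy =>
      have : aw (x ⋏ y) ++ v = aw x ++ (aw y ++ v) := by simp [aw]
      rw [this]
      calc (x ⋏ y) ⋏ wF v ≋ x ⋏ (y ⋏ wF v) := fel4 _ _ _
        _ ≋ x ⋏ wF (aw y ++ v) := and_congr (refl _) (ihy v)
        _ ≋ wF (aw x ++ (aw y ++ v)) := ihx _
  | or x y ihx ihy =>
      have : aw (x ⋎ y) ++ v = aw x ++ (aw y ++ v) := by simp [aw]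
      rw [this]
      calc (x ⋎ y) ⋏ wF v ≋ (x ⋏ y) ⋏ wF v := lemK x y v
        _ ≋ x ⋏ (y ⋏ wF v) := fel4 _ _ _
        _ ≋ x ⋏ wF (aw y ++ v) := and_congr (refl _) (ihy v)
        _ ≋ wF (aw x ++ (aw y ++ v)) := ihx _

lemma wTneg (w : List A) : ∼(wT w) ≋ wF w := by
  induction w with
  | nil => exact negT
  | cons a w ih =>
      calc ∼(atom a ⋎ wT w) ≋ ∼(atom a) ⋏ ∼(wT w) := dmAnd _ _
        _ ≋ ∼(atom a) ⋏ wF w := and_congr (refl _) ih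
        _ ≋ atom a ⋏ wF w := (gf8 (atom a) w).symm

lemma wFneg (w : List A) : ∼(wF w) ≋ wT w :=
  calc ∼(wF w) ≋ ∼∼(wT w) := neg_congr (wTneg w).symm
    _ ≋ wT w := fel3 _

lemma lemFOT : (fls ⋎ tru : FTerm A) ≋ tru :=
  calc (fls ⋎ tru : FTerm A) ≋ ∼(∼fls ⋏ ∼tru) := fel2 _ _
    _ ≋ ∼(tru ⋏ fls) := neg_congr (and_congr negF negT)
    _ ≋ ∼fls := neg_congr lemTF
    _ ≋ tru := negF

lemma tfact (v : List A) : wT v ≋ tcar v ⋎ tru := by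
  induction v with
  | nil => exact lemFOT.symm
  | cons a v ih =>
      calc atom a ⋎ wT v ≋ atom a ⋎ (tcar v ⋎ tru) := or_congr (refl _) ih
        _ ≋ (atom a ⋎ tcar v) ⋎ tru := (orAssoc _ _ _).symm

lemma fwt (x : FTerm A) (v : List A) : x ⋎ wT v ≋ wT (aw x ++ v) :=
  calc x ⋎ wT v ≋ ∼(∼x ⋏ ∼(wT v)) := fel2 _ _
    _ ≋ ∼(∼x ⋏ wF v) := neg_congr (and_congr (refl _) (wTneg v))
    _ ≋ ∼(wF (aw x ++ v)) := neg_congr (fwd (∼x) v)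
    _ ≋ wT (aw x ++ v) := wFneg _

lemma gt8 (x : FTerm A) (v : List A) : x ⋎ wT v ≋ ∼x ⋎ wT v :=
  (fwt x v).trans (fwt (∼x) v).symm

lemma lemTT (w v : List A) : wT w ⋏ wT v ≋ wT (w ++ v) := by
  have h : wT ((aw (tcar w) ++ aw (fls : FTerm A)) ++ v) = wT (w ++ v) := by simp [aw]
  calc wT w ⋏ wT v ≋ (tcar w ⋎ tru) ⋏ wT v := and_congr (tfact w) (refl _)
    _ ≋ (tcar w ⋏ fls) ⋎ wT v := (fel9 _ _).symm
    _ ≋ wT (aw (tcar w ⋏ fls) ++ v) := fwt _ v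
    _ ≋ wT (w ++ v) := by
        rw [show aw (tcar w ⋏ fls) = (aw (tcar w) ++ aw (fls : FTerm A)) from rfl, h]
        exact EqFFEL.refl _

lemma lemTF2 (w v : List A) : wT w ⋏ wF v ≋ wF (w ++ v) := by
  have := fwd (wT w) v
  rwa [aw_wT] at this

lemma lemFX (w : List A) (x : FTerm A) : wF w ⋏ x ≋ wF (w ++ aw x) := by
  induction w with
  | nil =>
      have h := fwd x []
      rw [List.append_nil] at h
      calc (fls ⋏ x : FTerm A) ≋ x ⋏ fls := (fel7 x).symm
        _ ≋ wF (aw x) := h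
  | cons a w ih =>
      calc (atom a ⋏ wF w) ⋏ x ≋ atom a ⋏ (wF w ⋏ x) := fel4 _ _ _
        _ ≋ atom a ⋏ wF (w ++ aw x) := and_congr (refl _) ih

lemma lemV (x y : FTerm A) (v : List A) : (x ⋎ y) ⋏ wT v ≋ x ⋎ (y ⋏ wT v) :=
  calc (x ⋎ y) ⋏ wT v ≋ (x ⋎ y) ⋏ (tcar v ⋎ tru) := and_congr (refl _) (tfact v)
    _ ≋ (x ⋎ y) ⋎ (tcar v ⋏ fls) := (fel10 _ _).symm
    _ ≋ x ⋎ (y ⋎ (tcar v ⋏ fls)) := orAssoc _ _ _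
    _ ≋ x ⋎ (y ⋏ (tcar v ⋎ tru)) := or_congr (refl _) (fel10 _ _)
    _ ≋ x ⋎ (y ⋏ wT v) := or_congr (refl _) (and_congr (refl _) (tfact v).symm)

lemma lemW (q : FTerm A) : ∼(q ⋏ fls) ≋ q ⋎ tru := by
  have h := (gt8 q []).symm
  calc ∼(q ⋏ fls) ≋ ∼q ⋎ ∼fls := dmOr _ _
    _ ≋ ∼q ⋎ tru := or_congr (refl _) negF
    _ ≋ q ⋎ tru := h

lemma lemNL (a : A) (w : List A) : ∼(atom a ⋏ wT w) ≋ ∼(atom a) ⋏ wT w := by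
  have h1 : atom a ⋏ wT w ≋ atom a ⋎ (tcar w ⋏ fls) :=
    calc atom a ⋏ wT w ≋ atom a ⋏ (tcar w ⋎ tru) := and_congr (refl _) (tfact w)
      _ ≋ atom a ⋎ (tcar w ⋏ fls) := (fel10 _ _).symm
  calc ∼(atom a ⋏ wT w) ≋ ∼(atom a ⋎ (tcar w ⋏ fls)) := neg_congr h1
    _ ≋ ∼(atom a) ⋏ ∼(tcar w ⋏ fls) := dmAnd _ _
    _ ≋ ∼(atom a) ⋏ (tcar w ⋎ tru) := and_congr (refl _) (lemW _)
    _ ≋ ∼(atom a) ⋏ wT w := and_congr (refl _) (tfact w).symm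

lemma lemNL2 (a : A) (w : List A) : ∼(∼(atom a) ⋏ wT w) ≋ atom a ⋏ wT w := by
  have h1 : ∼(atom a) ⋏ wT w ≋ ∼(atom a) ⋎ (tcar w ⋏ fls) :=
    calc ∼(atom a) ⋏ wT w ≋ ∼(atom a) ⋏ (tcar w ⋎ tru) := and_congr (refl _) (tfact w)
      _ ≋ ∼(atom a) ⋎ (tcar w ⋏ fls) := (fel10 _ _).symm
  calc ∼(∼(atom a) ⋏ wT w) ≋ ∼(∼(atom a) ⋎ (tcar w ⋏ fls)) := neg_congr h1
    _ ≋ ∼∼(atom a) ⋏ ∼(tcar w ⋏ fls) := dmAnd _ _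
    _ ≋ atom a ⋏ (tcar w ⋎ tru) := and_congr (fel3 _) (lemW _)
    _ ≋ atom a ⋏ wT w := and_congr (refl _) (tfact w).symm

lemma carT (w : List A) : fcar w ⋎ tru ≋ wT w := by
  have h := fwt (fcar w) []
  simp at h
  exact h

lemma lemFOX (w : List A) (x : FTerm A) : wF w ⋎ x ≋ wT w ⋏ x :=
  calc wF w ⋎ x ≋ (fcar w ⋏ fls) ⋎ x := or_congr (ffact w) (refl _)
    _ ≋ (fcar w ⋎ tru) ⋏ x := fel9 _ _
    _ ≋ wT w ⋏ x := and_congr (carT w) (refl _)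

/-! #### Normal forms -/

/-- Star-terms (`ℓ`, `c`, `d` terms). -/
inductive St (A : Type) : Type
  | pos : A → List A → St A
  | neg : A → List A → St A
  | sand : St A → St A → St A
  | sor : St A → St A → St A

def St.den : St A → FTerm A
  | .pos a w => atom a ⋏ wT w
  | .neg a w => ∼(atom a) ⋏ wT w
  | .sand s d => s.den ⋏ d.den
  | .sor s c => s.den ⋎ c.den

def isD : St A → Prop
  | .sand _ _ => False
  | _ => True

def isC : St A → Prop
  | .sor _ _ => False
  | _ => True

def wfS : St A → Prop
  | .pos _ _ => True
  | .neg _ _ => True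
  | .sand s d => wfS s ∧ wfS d ∧ isD d
  | .sor s c => wfS s ∧ wfS c ∧ isC c

/-- Normal forms. -/
inductive NF (A : Type) : Type
  | t : List A → NF A
  | f : List A → NF A
  | ts : List A → St A → NF A

def NF.den : NF A → FTerm A
  | .t w => wT w
  | .f w => wF w
  | .ts w s => wT w ⋏ s.den

def wfN : NF A → Prop
  | .ts _ s => wfS s
  | _ => True

/-! negation -/

def nstar : St A → St A
  | .pos a w => .neg a w
  | .neg a w => .pos a w
  | .sand s d => .sor (nstar s) (nstar d)
  | .sor s c => .sand (nstar s) (nstar c)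

lemma nstar_sound (s : St A) : ∼(s.den) ≋ (nstar s).den := by
  induction s with
  | pos a w => exact lemNL a w
  | neg a w => exact lemNL2 a w
  | sand s d ihs ihd =>
      calc ∼(s.den ⋏ d.den) ≋ ∼(s.den) ⋎ ∼(d.den) := dmOr _ _
        _ ≋ (nstar s).den ⋎ (nstar d).den := or_congr ihs ihd
  | sor s c ihs ihc =>
      calc ∼(s.den ⋎ c.den) ≋ ∼(s.den) ⋏ ∼(c.den) := dmAnd _ _
        _ ≋ (nstar s).den ⋏ (nstar c).den := and_congr ihs ihc

lemma isC_nstar {s : St A} (h : isD s) : isC (nstar s) := by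
  cases s <;> simp [isD, isC, nstar] at *

lemma isD_nstar {s : St A} (h : isC s) : isD (nstar s) := by
  cases s <;> simp [isD, isC, nstar] at *

lemma wfS_nstar {s : St A} (h : wfS s) : wfS (nstar s) := by
  induction s with
  | pos a w => trivial
  | neg a w => trivial
  | sand s d ihs ihd => exact ⟨ihs h.1, ihd h.2.1, isC_nstar h.2.2⟩
  | sor s c ihs ihc => exact ⟨ihs h.1, ihc h.2.1, isD_nstar h.2.2⟩

/-! absorbing a T-word on the right of a star term -/

def sandT : St A → List A → St A
  | .pos a w, v => .pos a (w ++ v)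
  | .neg a w, v => .neg a (w ++ v)
  | .sand s d, v => .sand s (sandT d v)
  | .sor s c, v => .sor s (sandT c v)

lemma sandT_sound (s : St A) (v : List A) : s.den ⋏ wT v ≋ (sandT s v).den := by
  induction s with
  | pos a w =>
      calc (atom a ⋏ wT w) ⋏ wT v ≋ atom a ⋏ (wT w ⋏ wT v) := fel4 _ _ _
        _ ≋ atom a ⋏ wT (w ++ v) := and_congr (refl _) (lemTT w v)
  | neg a w =>
      calc (∼(atom a) ⋏ wT w) ⋏ wT v ≋ ∼(atom a) ⋏ (wT w ⋏ wT v) := fel4 _ _ _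
        _ ≋ ∼(atom a) ⋏ wT (w ++ v) := and_congr (refl _) (lemTT w v)
  | sand s d ihs ihd =>
      calc (s.den ⋏ d.den) ⋏ wT v ≋ s.den ⋏ (d.den ⋏ wT v) := fel4 _ _ _
        _ ≋ s.den ⋏ (sandT d v).den := and_congr (refl _) ihd
  | sor s c ihs ihc =>
      calc (s.den ⋎ c.den) ⋏ wT v ≋ s.den ⋎ (c.den ⋏ wT v) := lemV _ _ _
        _ ≋ s.den ⋎ (sandT c v).den := or_congr (refl _) ihc

lemma isD_sandT {s : St A} (v : List A) (h : isD s) : isD (sandT s v) := by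
  cases s <;> simp [isD, sandT] at *

lemma isC_sandT {s : St A} (v : List A) (h : isC s) : isC (sandT s v) := by
  cases s <;> simp [isC, sandT] at *

lemma wfS_sandT {s : St A} (v : List A) (h : wfS s) : wfS (sandT s v) := by
  induction s with
  | pos a w => trivial
  | neg a w => trivial
  | sand s d ihs ihd => exact ⟨h.1, ihd h.2.1, isD_sandT v h.2.2⟩
  | sor s c ihs ihc => exact ⟨h.1, ihc h.2.1, isC_sandT v h.2.2⟩

/-! conjunction of two star terms -/

def sstar : St A → St A → St A
  | s, .sand s1 d1 => .sand (sstar s s1) d1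
  | s, s' => .sand s s'

lemma sstar_sound (s s' : St A) : s.den ⋏ s'.den ≋ (sstar s s').den := by
  induction s' generalizing s with
  | sand s1 d1 ihs1 ihd1 =>
      calc s.den ⋏ (s1.den ⋏ d1.den) ≋ (s.den ⋏ s1.den) ⋏ d1.den := (fel4 _ _ _).symm
        _ ≋ (sstar s s1).den ⋏ d1.den := and_congr (ihs1 s) (refl _)
  | pos a w => exact refl _
  | neg a w => exact refl _
  | sor s1 c1 _ _ => exact refl _

lemma wfS_sstar {s s' : St A} (hs : wfS s) (hs' : wfS s') : wfS (sstar s s') := by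
  induction s' generalizing s with
  | sand s1 d1 ihs1 ihd1 => exact ⟨ihs1 hs hs'.1, hs'.2.1, hs'.2.2⟩
  | pos a w => exact ⟨hs, trivial, trivial⟩
  | neg a w => exact ⟨hs, trivial, trivial⟩
  | sor s1 c1 _ _ => exact ⟨hs, hs', trivial⟩

/-! words -/

def sw : St A → List A
  | .pos a w => a :: w
  | .neg a w => a :: w
  | .sand s d => sw s ++ sw d
  | .sor s c => sw s ++ sw c

def nw : NF A → List A
  | .t w => w
  | .f w => w
  | .ts w s => w ++ sw s

lemma aw_sden (s : St A) : aw s.den = sw s := by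
  induction s with
  | pos a w => simp [St.den, aw, sw]
  | neg a w => simp [St.den, aw, sw]
  | sand s d ihs ihd => simp [St.den, aw, sw, ihs, ihd]
  | sor s c ihs ihc => simp [St.den, aw, sw, ihs, ihc]

lemma aw_nden (N : NF A) : aw N.den = nw N := by
  cases N with
  | t w => simp [NF.den, nw]
  | f w => simp [NF.den, nw]
  | ts w s => simp [NF.den, aw, nw, aw_sden]

/-! negation and conjunction on normal forms -/

def nneg : NF A → NF A
  | .t w => .f w
  | .f w => .t w
  | .ts w s => .ts w (nstar s)

lemma nneg_sound (N : NF A) : ∼(N.den) ≋ (nneg N).den := by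
  cases N with
  | t w => exact wTneg w
  | f w => exact wFneg w
  | ts w s =>
      calc ∼(wT w ⋏ s.den) ≋ ∼(wT w) ⋎ ∼(s.den) := dmOr _ _
        _ ≋ wF w ⋎ ∼(s.den) := or_congr (wTneg w) (refl _)
        _ ≋ wT w ⋏ ∼(s.den) := lemFOX w _
        _ ≋ wT w ⋏ (nstar s).den := and_congr (refl _) (nstar_sound s)

lemma wfN_nneg {N : NF A} (h : wfN N) : wfN (nneg N) := by
  cases N with
  | t w => trivial
  | f w => trivial
  | ts w s => exact wfS_nstar h

def cnf : NF A → NF A → NF A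
  | .t w, .t v => .t (w ++ v)
  | .t w, .f v => .f (w ++ v)
  | .t w, .ts v s => .ts (w ++ v) s
  | .f w, Q => .f (w ++ nw Q)
  | .ts w s, .t v => .ts w (sandT s v)
  | .ts w s, .f v => .f (w ++ (sw s ++ v))
  | .ts w s, .ts v s' => .ts w (sstar (sandT s v) s')

lemma cnf_sound (P Q : NF A) : P.den ⋏ Q.den ≋ (cnf P Q).den := by
  cases P with
  | t w =>
      cases Q with
      | t v => exact lemTT w v
      | f v => exact lemTF2 w v
      | ts v s =>
          calc wT w ⋏ (wT v ⋏ s.den) ≋ (wT w ⋏ wT v) ⋏ s.den := (fel4 _ _ _).symm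
            _ ≋ wT (w ++ v) ⋏ s.den := and_congr (lemTT w v) (refl _)
  | f w =>
      have h := lemFX w (Q.den)
      rw [aw_nden] at h
      exact h
  | ts w s =>
      cases Q with
      | t v =>
          calc (wT w ⋏ s.den) ⋏ wT v ≋ wT w ⋏ (s.den ⋏ wT v) := fel4 _ _ _
            _ ≋ wT w ⋏ (sandT s v).den := and_congr (refl _) (sandT_sound s v)
      | f v =>
          have h := fwd (s.den) v
          rw [aw_sden] at h
          calc (wT w ⋏ s.den) ⋏ wF v ≋ wT w ⋏ (s.den ⋏ wF v) := fel4 _ _ _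
            _ ≋ wT w ⋏ wF (sw s ++ v) := and_congr (refl _) h
            _ ≋ wF (w ++ (sw s ++ v)) := lemTF2 w _
      | ts v s' =>
          calc (wT w ⋏ s.den) ⋏ (wT v ⋏ s'.den)
              ≋ wT w ⋏ (s.den ⋏ (wT v ⋏ s'.den)) := fel4 _ _ _
            _ ≋ wT w ⋏ ((s.den ⋏ wT v) ⋏ s'.den) := and_congr (refl _) (fel4 _ _ _).symm
            _ ≋ wT w ⋏ ((sandT s v).den ⋏ s'.den) :=
                and_congr (refl _) (and_congr (sandT_sound s v) (refl _))
            _ ≋ wT w ⋏ (sstar (sandT s v) s').den := and_congr (refl _) (sstar_sound _ _)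

lemma wfN_cnf {P Q : NF A} (hP : wfN P) (hQ : wfN Q) : wfN (cnf P Q) := by
  cases P with
  | t w => cases Q with
    | t v => trivial
    | f v => trivial
    | ts v s => exact hQ
  | f w => cases Q <;> trivial
  | ts w s =>
      cases Q with
      | t v => exact wfS_sandT v hP
      | f v => trivial
      | ts v s' => exact wfS_sstar (wfS_sandT v hP) hQ

/-! normalization -/

def nf : FTerm A → NF A
  | .atom a => .ts [] (.pos a [])
  | .tru => .t []
  | .fls => .f []
  | .neg p => nneg (nf p)
  | .and p q => cnf (nf p) (nf q)
  | .or p q => nneg (cnf (nneg (nf p)) (nneg (nf q)))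

lemma nf_sound (P : FTerm A) : P ≋ (nf P).den := by
  induction P with
  | atom a =>
      show atom a ≋ wT [] ⋏ (atom a ⋏ wT [])
      calc atom a ≋ atom a ⋏ tru := (fel6 _).symm
        _ ≋ tru ⋏ (atom a ⋏ tru) := (fel5 _).symm
  | tru => exact refl _
  | fls => exact refl _
  | neg p ih =>
      calc ∼p ≋ ∼((nf p).den) := neg_congr ih
        _ ≋ (nneg (nf p)).den := nneg_sound _
  | and p q ihp ihq =>
      calc p ⋏ q ≋ (nf p).den ⋏ (nf q).den := and_congr ihp ihq
        _ ≋ (cnf (nf p) (nf q)).den := cnf_sound _ _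
  | or p q ihp ihq =>
      have hp : ∼p ≋ (nneg (nf p)).den := (neg_congr ihp).trans (nneg_sound _)
      have hq : ∼q ≋ (nneg (nf q)).den := (neg_congr ihq).trans (nneg_sound _)
      calc p ⋎ q ≋ ∼(∼p ⋏ ∼q) := fel2 _ _
        _ ≋ ∼((nneg (nf p)).den ⋏ (nneg (nf q)).den) := neg_congr (and_congr hp hq)
        _ ≋ ∼((cnf (nneg (nf p)) (nneg (nf q))).den) := neg_congr (cnf_sound _ _)
        _ ≋ (nneg (cnf (nneg (nf p)) (nneg (nf q)))).den := nneg_sound _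

lemma nf_wf (P : FTerm A) : wfN (nf P) := by
  induction P with
  | atom a => trivial
  | tru => trivial
  | fls => trivial
  | neg p ih => exact wfN_nneg ih
  | and p q ihp ihq => exact wfN_cnf ihp ihq
  | or p q ihp ihq => exact wfN_nneg (wfN_cnf (wfN_nneg ihp) (wfN_nneg ihq))

/-! #### Soundness of EqFFEL with respect to `fe` -/

lemma fe_sound {p q : FTerm A} (h : p ≋ q) : fe p = fe q := by
  induction h with
  | refl p => rfl
  | symm _ ih => exact ih.symm
  | trans _ _ ih1 ih2 => exact ih1.trans ih2
  | neg_congr _ ih => simp [fe, ih]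
  | and_congr _ _ ih1 ih2 => simp [fe, ih1, ih2]
  | or_congr _ _ ih1 ih2 => simp [fe, ih1, ih2]
  | fel1 => rfl
  | fel2 x y => simp [fe, subst_subst]
  | fel3 x => simp [fe, subst_subst]
  | fel4 x y z => simp [fe, subst_subst]
  | fel5 x => simp [fe, subst_subst]
  | fel6 x => simp [fe, subst_subst]
  | fel7 x => simp [fe, subst_subst]
  | fel8 x => simp [fe, subst_subst]
  | fel9 x y => simp [fe, subst_subst]
  | fel10 x y => simp [fe, subst_subst]

/-! #### Trees of normal forms -/

def graft : List A → ETree A → ETree A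
  | [], X => X
  | a :: w, X => .node (graft w X) a (graft w X)

@[simp] lemma graft_nil (X : ETree A) : graft [] X = X := rfl
@[simp] lemma graft_cons (a : A) (w : List A) (X : ETree A) :
    graft (a :: w) X = .node (graft w X) a (graft w X) := rfl

lemma graft_hasTru (w : List A) (X : ETree A) : (graft w X).hasTru ↔ X.hasTru := by
  induction w with
  | nil => rfl
  | cons a w ih => simp [ih]

lemma graft_hasFls (w : List A) (X : ETree A) : (graft w X).hasFls ↔ X.hasFls := by
  induction w with
  | nil => rfl
  | cons a w ih => simp [ih]

lemma subst_allT_graft (w : List A) (U V : ETree A) :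
    (allT w).subst U V = graft w U := by
  induction w with
  | nil => rfl
  | cons a w ih => simp [ih]

lemma subst_allF_graft (w : List A) (U V : ETree A) :
    (allF w).subst U V = graft w V := by
  induction w with
  | nil => rfl
  | cons a w ih => simp [ih]

lemma fe_wT (w : List A) : fe (wT w) = allT w := by
  induction w with
  | nil => rfl
  | cons a w ih =>
      show ETree.node ((fe (wT w)).subst .tru .tru) a (fe (wT w)) = _
      rw [ih, show (allT w).subst ETree.tru ETree.tru = allT w from erase_allT w]
      rfl

lemma graft_allF (w : List A) : graft w (ETree.fls (A := A)) = allF w := by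
  induction w with
  | nil => rfl
  | cons a w ih => simp [ih]

lemma graft_allT (w : List A) : graft w (ETree.tru (A := A)) = allT w := by
  induction w with
  | nil => rfl
  | cons a w ih => simp [ih]

lemma fe_wF (w : List A) : fe (wF w) = allF w := by
  induction w with
  | nil => rfl
  | cons a w ih =>
      show ETree.node (fe (wF w)) a ((fe (wF w)).subst .fls .fls) = _
      rw [ih, subst_allF_graft, graft_allF]
      rfl

lemma fe_pos (a : A) (w : List A) :
    fe (St.pos a w).den = .node (allT w) a (allF w) := by
  show ETree.node (fe (wT w)) a ((fe (wT w)).subst .fls .fls) = _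
  rw [fe_wT, subst_allT_graft, graft_allF]

lemma fe_neg' (a : A) (w : List A) :
    fe (St.neg a w).den = .node (allF w) a (allT w) := by
  show ETree.node ((fe (wT w)).subst .fls .fls) a (fe (wT w)) = _
  rw [fe_wT, subst_allT_graft, graft_allF]

lemma fe_sand (s d : St A) :
    fe (St.sand s d).den
      = (fe s.den).subst (fe d.den) ((fe d.den).subst .fls .fls) := rfl

lemma fe_sor (s c : St A) :
    fe (St.sor s c).den
      = (fe s.den).subst ((fe c.den).subst .tru .tru) (fe c.den) := rfl

/-! #### Structural facts about star trees -/

lemma st_both (s : St A) : (fe s.den).hasTru ∧ (fe s.den).hasFls := by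
  induction s with
  | pos a w =>
      rw [fe_pos]
      exact ⟨Or.inl (allT_hasTru w), Or.inr (allF_hasFls w)⟩
  | neg a w =>
      rw [fe_neg']
      exact ⟨Or.inr (allT_hasTru w), Or.inl (allF_hasFls w)⟩
  | sand s d ihs ihd =>
      rw [fe_sand]
      constructor
      · rw [hasTru_subst]; exact Or.inl ⟨ihs.1, ihd.1⟩
      · rw [hasFls_subst]; exact Or.inl ⟨ihs.1, ihd.2⟩
  | sor s c ihs ihc =>
      rw [fe_sor]
      constructor
      · rw [hasTru_subst]; exact Or.inr ⟨ihs.2, ihc.1⟩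
      · rw [hasFls_subst]; exact Or.inr ⟨ihs.2, ihc.2⟩

lemma node_of_both {X : ETree A} (h1 : X.hasTru) (h2 : X.hasFls) :
    ∃ l a r, X = .node l a r := by
  cases X with
  | tru => exact absurd h2 (by simp)
  | fls => exact absurd h1 (by simp)
  | node l a r => exact ⟨l, a, r, rfl⟩

lemma st_node (s : St A) : ∃ l a r, fe s.den = .node l a r :=
  node_of_both (st_both s).1 (st_both s).2

/-- `Z[T↦F,F↦F]` : depth, leaves. -/
lemma depth_AF (Z : ETree A) : (Z.subst .fls .fls).depth = Z.depth := by
  rw [depth_subst _ _ _ rfl]; rfl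

lemma depth_AT (Z : ETree A) : (Z.subst .tru .tru).depth = Z.depth := by
  rw [depth_subst _ _ _ rfl]; rfl

lemma AF_not_hasTru (Z : ETree A) : ¬ (Z.subst .fls .fls).hasTru := by
  rw [hasTru_subst]; simp

lemma AT_not_hasFls (Z : ETree A) : ¬ (Z.subst .tru .tru).hasFls := by
  rw [hasFls_subst]; simp

lemma AF_hasFls (Z : ETree A) : (Z.subst .fls .fls).hasFls :=
  hasFls_subst_of _ _ _ (by simp) (by simp)

lemma AT_hasTru (Z : ETree A) : (Z.subst .tru .tru).hasTru :=
  hasTru_subst_of _ _ _ (by simp) (by simp)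

lemma erase_AF (Z : ETree A) : erase (Z.subst .fls .fls) = erase Z := by
  unfold erase; rw [subst_subst]; rfl

lemma erase_AT (Z : ETree A) : erase (Z.subst .tru .tru) = erase Z := by
  unfold erase; rw [subst_subst]; rfl

lemma unif_fe (P : FTerm A) : Unif (fe P) := by
  induction P with
  | atom a => exact ⟨trivial, trivial, rfl⟩
  | tru => trivial
  | fls => trivial
  | neg p ih => exact unif_subst ih trivial trivial rfl
  | and p q ihp ihq =>
      exact unif_subst ihp ihq (unif_subst ihq trivial trivial rfl) (erase_AF _).symm
  | or p q ihp ihq =>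
      exact unif_subst ihp (unif_subst ihq trivial trivial rfl) ihq (erase_AT _)

/-- Children of a star tree are distinct. -/
lemma star_child_ne (s : St A) (hwf : wfS s) {l : ETree A} {a : A} {r : ETree A}
    (h : fe s.den = .node l a r) : l ≠ r := by
  induction s generalizing l a r with
  | pos b w =>
      rw [fe_pos] at h
      injection h with h1 h2 h3
      rw [← h1, ← h3]
      intro hc
      exact allF_not_hasTru w (hc ▸ allT_hasTru w)
  | neg b w =>
      rw [fe_neg'] at h
      injection h with h1 h2 h3
      rw [← h1, ← h3]
      intro hc
      exact allF_not_hasTru w (hc ▸ allT_hasTru w)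
  | sand s d ihs ihd =>
      obtain ⟨SL, b, SR, hS⟩ := st_node s
      rw [fe_sand, hS] at h
      simp only [subst_node] at h
      injection h with h1 h2 h3
      rw [← h1, ← h3]
      intro hc
      have hne : fe d.den ≠ (fe d.den).subst .fls .fls := by
        intro he
        exact AF_not_hasTru _ (he ▸ (st_both d).1)
      exact ihs hwf.1 hS (subst_cancel (depth_AF _).symm hne hc)
  | sor s c ihs ihc =>
      obtain ⟨SL, b, SR, hS⟩ := st_node s
      rw [fe_sor, hS] at h
      simp only [subst_node] at h
      injection h with h1 h2 h3
      rw [← h1, ← h3]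
      intro hc
      have hne : (fe c.den).subst .tru .tru ≠ fe c.den := by
        intro he
        exact AT_not_hasFls _ (he ▸ (st_both c).2)
      exact ihs hwf.1 hS (subst_cancel (depth_AT _) hne hc)

/-- d-terms admit no conjunction decomposition. -/
lemma dnc (d : St A) (hd : isD d) (hwf : wfS d) (Y Z : ETree A)
    (hEq : fe d.den = Y.subst Z (Z.subst .fls .fls))
    (hYt : Y.hasTru) (hYf : Y.hasFls) (hZt : Z.hasTru) (hZf : Z.hasFls) : False := by
  cases d with
  | sand s d' => exact hd
  | pos a w =>
      obtain ⟨YL, b, YR, hY⟩ := node_of_both hYt hYf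
      rw [fe_pos, hY] at hEq
      simp only [subst_node] at hEq
      injection hEq with h1 h2 h3
      exact allT_not_hasFls w (h1 ▸ hasFls_subst_of YL _ _ hZf (AF_hasFls Z))
  | neg a w =>
      obtain ⟨YL, b, YR, hY⟩ := node_of_both hYt hYf
      rw [fe_neg', hY] at hEq
      simp only [subst_node] at hEq
      injection hEq with h1 h2 h3
      exact allT_not_hasFls w (h3 ▸ hasFls_subst_of YR _ _ hZf (AF_hasFls Z))
  | sor s c =>
      set S := fe s.den with hSdef
      set Zc := fe c.den with hZcdef
      set ZT := Zc.subst .tru .tru with hZTdef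
      have hX : fe (St.sor s c).den = S.subst ZT Zc := fe_sor s c
      have hdepthTC : ZT.depth = Zc.depth := depth_AT Zc
      have hdepthZA : Z.depth = (Z.subst .fls .fls).depth := (depth_AF Z).symm
      have hZTt : ZT.hasTru := AT_hasTru Zc
      have hZTf : ¬ ZT.hasFls := AT_not_hasFls Zc
      have hZct : Zc.hasTru := (st_both c).1
      have hZcf : Zc.hasFls := (st_both c).2
      have hSt : S.hasTru := (st_both s).1
      have hSf : S.hasFls := (st_both s).2
      rcases lt_trichotomy Z.depth Zc.depth with hlt | heq | hgt
      · -- conj pieces strictly below: the all-T subtree ZT would contain an F leaf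
        have hOcc : Occ (fe (St.sor s c).den) ZT := by
          rw [hX]; exact occ_subst_of_hasTru _ _ hSt
        rw [hEq] at hOcc
        obtain ⟨Y', _, ⟨l, b, r, hY'⟩, hZT2⟩ :=
          occ_subst_above hdepthZA hOcc (by rw [hdepthTC]; exact hlt)
        have : Y'.hasTru ∨ Y'.hasFls := total Y'
        rcases this with h | h
        · exact hZTf (occ_hasFls (hZT2 ▸ occ_subst_of_hasTru _ _ h) hZf)
        · exact hZTf (occ_hasFls (hZT2 ▸ occ_subst_of_hasFls _ _ h) (AF_hasFls Z))
      · -- equal depth: the all-F piece must coincide with ZT or Zc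
        have hOcc : Occ (fe (St.sor s c).den) (Z.subst .fls .fls) := by
          rw [hEq]; exact occ_subst_of_hasFls _ _ hYf
        rw [hX] at hOcc
        have := occ_subst_level hdepthTC (unif_subst (unif_fe _) trivial trivial rfl)
          (unif_fe _) hOcc (by rw [depth_AF, hdepthTC]; exact heq)
        rcases this with h | h
        · exact hZTf (h ▸ AF_hasFls Z)
        · exact AF_not_hasTru Z (h ▸ hZct)
      · -- conj pieces strictly above: the all-F piece decomposes over (ZT, Zc)
        have hOcc : Occ (fe (St.sor s c).den) (Z.subst .fls .fls) := by
          rw [hEq]; exact occ_subst_of_hasFls _ _ hYf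
        rw [hX] at hOcc
        obtain ⟨Y', _, ⟨l, b, r, hY'⟩, hA⟩ :=
          occ_subst_above hdepthTC hOcc (by rw [depth_AF, hdepthTC]; exact hgt)
        have : Y'.hasTru ∨ Y'.hasFls := total Y'
        rcases this with h | h
        · exact AF_not_hasTru Z (occ_hasTru (hA ▸ occ_subst_of_hasTru _ _ h) hZTt)
        · exact AF_not_hasTru Z (occ_hasTru (hA ▸ occ_subst_of_hasFls _ _ h) hZct)

/-- c-terms admit no disjunction decomposition. -/
lemma cnc (c : St A) (hc : isC c) (hwf : wfS c) (Y Z : ETree A)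
    (hEq : fe c.den = Y.subst (Z.subst .tru .tru) Z)
    (hYt : Y.hasTru) (hYf : Y.hasFls) (hZt : Z.hasTru) (hZf : Z.hasFls) : False := by
  cases c with
  | sor s c' => exact hc
  | pos a w =>
      obtain ⟨YL, b, YR, hY⟩ := node_of_both hYt hYf
      rw [fe_pos, hY] at hEq
      simp only [subst_node] at hEq
      injection hEq with h1 h2 h3
      exact allF_not_hasTru w (h3 ▸ hasTru_subst_of YR _ _ (AT_hasTru Z) hZt)
  | neg a w =>
      obtain ⟨YL, b, YR, hY⟩ := node_of_both hYt hYf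
      rw [fe_neg', hY] at hEq
      simp only [subst_node] at hEq
      injection hEq with h1 h2 h3
      exact allF_not_hasTru w (h1 ▸ hasTru_subst_of YL _ _ (AT_hasTru Z) hZt)
  | sand s d =>
      set S := fe s.den with hSdef
      set Zd := fe d.den with hZddef
      set AD := Zd.subst .fls .fls with hADdef
      have hX : fe (St.sand s d).den = S.subst Zd AD := fe_sand s d
      have hdepthDA : Zd.depth = AD.depth := (depth_AF Zd).symm
      have hdepthTZ : (Z.subst .tru .tru).depth = Z.depth := depth_AT Z
      have hADf : AD.hasFls := AF_hasFls Zd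
      have hADnt : ¬ AD.hasTru := AF_not_hasTru Zd
      have hZdt : Zd.hasTru := (st_both d).1
      have hZdf : Zd.hasFls := (st_both d).2
      have hSt : S.hasTru := (st_both s).1
      have hSf : S.hasFls := (st_both s).2
      rcases lt_trichotomy Z.depth Zd.depth with hlt | heq | hgt
      · -- disj pieces strictly below: AD would contain a T leaf
        have hOcc : Occ (fe (St.sand s d).den) AD := by
          rw [hX]; exact occ_subst_of_hasFls _ _ hSf
        rw [hEq] at hOcc
        obtain ⟨Y', _, ⟨l, b, r, hY'⟩, hA⟩ :=
          occ_subst_above hdepthTZ hOcc (by rw [hdepthTZ, ← hdepthDA]; exact hlt)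
        have : Y'.hasTru ∨ Y'.hasFls := total Y'
        rcases this with h | h
        · exact hADnt (occ_hasTru (hA ▸ occ_subst_of_hasTru _ _ h) (AT_hasTru Z))
        · exact hADnt (occ_hasTru (hA ▸ occ_subst_of_hasFls _ _ h) hZt)
      · -- equal depth
        have hOcc : Occ (fe (St.sand s d).den) (Z.subst .tru .tru) := by
          rw [hEq]; exact occ_subst_of_hasTru _ _ hYt
        rw [hX] at hOcc
        have := occ_subst_level hdepthDA (unif_fe _)
          (unif_subst (unif_fe _) trivial trivial rfl) hOcc (by rw [hdepthTZ, heq])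
        rcases this with h | h
        · exact AT_not_hasFls Z (h ▸ hZdf)
        · exact hADnt (h ▸ AT_hasTru Z)
      · -- disj pieces strictly above
        have hOcc : Occ (fe (St.sand s d).den) (Z.subst .tru .tru) := by
          rw [hEq]; exact occ_subst_of_hasTru _ _ hYt
        rw [hX] at hOcc
        obtain ⟨Y', _, ⟨l, b, r, hY'⟩, hA⟩ :=
          occ_subst_above hdepthDA hOcc (by rw [hdepthTZ]; exact hgt)
        have : Y'.hasTru ∨ Y'.hasFls := total Y'
        rcases this with h | h
        · exact AT_not_hasFls Z (occ_hasFls (hA ▸ occ_subst_of_hasTru _ _ h) hZdf)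
        · exact AT_not_hasFls Z (occ_hasFls (hA ▸ occ_subst_of_hasFls _ _ h) hADf)

/-! #### Uniqueness of decompositions -/

lemma conj_not_lt {s1 d1 s2 d2 : St A} (h1 : wfS (St.sand s1 d1)) (h2 : wfS (St.sand s2 d2))
    (h : fe (St.sand s1 d1).den = fe (St.sand s2 d2).den) :
    ¬ (fe d1.den).depth < (fe d2.den).depth := by
  intro hlt
  have hOcc : Occ ((fe s1.den).subst (fe d1.den) ((fe d1.den).subst .fls .fls)) (fe d2.den) := by
    rw [← fe_sand, h, fe_sand]
    exact occ_subst_of_hasTru _ _ (st_both s2).1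
  obtain ⟨Y', hOy, ⟨l, b, r, hY'⟩, hZ2⟩ :=
    occ_subst_above (depth_AF (fe d1.den)).symm hOcc hlt
  by_cases hYt : Y'.hasTru
  · by_cases hYf : Y'.hasFls
    · exact dnc d2 h2.2.2 h2.2.1 Y' (fe d1.den) hZ2 hYt hYf (st_both d1).1 (st_both d1).2
    · obtain ⟨w, hw⟩ := unif_allT_of_not_hasFls (occ_unif hOy (unif_fe _)) hYf
      cases w with
      | nil => rw [hw] at hY'; exact absurd hY' (by simp [allT])
      | cons a w' =>
          rw [hw, subst_allT_graft] at hZ2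
          exact star_child_ne d2 h2.2.1 hZ2 rfl
  · obtain ⟨w, hw⟩ := unif_allF_of_not_hasTru (occ_unif hOy (unif_fe _)) hYt
    rw [hw, subst_allF_graft] at hZ2
    exact AF_not_hasTru (fe d1.den) ((graft_hasTru _ _).mp (hZ2 ▸ (st_both d2).1))

lemma conj_unique {s1 d1 s2 d2 : St A} (h1 : wfS (St.sand s1 d1)) (h2 : wfS (St.sand s2 d2))
    (h : fe (St.sand s1 d1).den = fe (St.sand s2 d2).den) :
    fe s1.den = fe s2.den ∧ fe d1.den = fe d2.den := by
  have hd : (fe d1.den).depth = (fe d2.den).depth :=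
    le_antisymm (not_lt.mp (conj_not_lt h2 h1 h.symm)) (not_lt.mp (conj_not_lt h1 h2 h))
  have hOcc : Occ ((fe s2.den).subst (fe d2.den) ((fe d2.den).subst .fls .fls)) (fe d1.den) := by
    rw [← fe_sand, ← h, fe_sand]
    exact occ_subst_of_hasTru _ _ (st_both s1).1
  have hlevel := occ_subst_level (depth_AF (fe d2.den)).symm (unif_fe _)
    (unif_subst (unif_fe _) trivial trivial rfl) hOcc hd
  rcases hlevel with hZ | hZ
  · refine ⟨?_, hZ⟩
    have hne : fe d1.den ≠ (fe d1.den).subst .fls .fls := by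
      intro he
      exact AF_not_hasTru _ (he ▸ (st_both d1).1)
    apply subst_cancel (depth_AF (fe d1.den)).symm hne
    have h' := h
    rw [fe_sand, fe_sand, ← hZ] at h'
    exact h'
  · exact absurd (hZ ▸ (st_both d1).1) (AF_not_hasTru _)

lemma disj_not_lt {s1 c1 s2 c2 : St A} (h1 : wfS (St.sor s1 c1)) (h2 : wfS (St.sor s2 c2))
    (h : fe (St.sor s1 c1).den = fe (St.sor s2 c2).den) :
    ¬ (fe c1.den).depth < (fe c2.den).depth := by
  intro hlt
  have hOcc : Occ ((fe s1.den).subst ((fe c1.den).subst .tru .tru) (fe c1.den)) (fe c2.den) := by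
    rw [← fe_sor, h, fe_sor]
    exact occ_subst_of_hasFls _ _ (st_both s2).2
  obtain ⟨Y', hOy, ⟨l, b, r, hY'⟩, hZ2⟩ :=
    occ_subst_above (depth_AT (fe c1.den)) hOcc (by rw [depth_AT]; exact hlt)
  by_cases hYt : Y'.hasTru
  · by_cases hYf : Y'.hasFls
    · exact cnc c2 h2.2.2 h2.2.1 Y' (fe c1.den) hZ2 hYt hYf (st_both c1).1 (st_both c1).2
    · obtain ⟨w, hw⟩ := unif_allT_of_not_hasFls (occ_unif hOy (unif_fe _)) hYf
      rw [hw, subst_allT_graft] at hZ2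
      exact AT_not_hasFls (fe c1.den) ((graft_hasFls _ _).mp (hZ2 ▸ (st_both c2).2))
  · obtain ⟨w, hw⟩ := unif_allF_of_not_hasTru (occ_unif hOy (unif_fe _)) hYt
    cases w with
    | nil => rw [hw] at hY'; exact absurd hY' (by simp [allF])
    | cons a w' =>
        rw [hw, subst_allF_graft] at hZ2
        exact star_child_ne c2 h2.2.1 hZ2 rfl

lemma disj_unique {s1 c1 s2 c2 : St A} (h1 : wfS (St.sor s1 c1)) (h2 : wfS (St.sor s2 c2))
    (h : fe (St.sor s1 c1).den = fe (St.sor s2 c2).den) :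
    fe s1.den = fe s2.den ∧ fe c1.den = fe c2.den := by
  have hd : (fe c1.den).depth = (fe c2.den).depth :=
    le_antisymm (not_lt.mp (disj_not_lt h2 h1 h.symm)) (not_lt.mp (disj_not_lt h1 h2 h))
  have hOcc : Occ ((fe s2.den).subst ((fe c2.den).subst .tru .tru) (fe c2.den)) (fe c1.den) := by
    rw [← fe_sor, ← h, fe_sor]
    exact occ_subst_of_hasFls _ _ (st_both s1).2
  have hlevel := occ_subst_level (depth_AT (fe c2.den))
    (unif_subst (unif_fe _) trivial trivial rfl) (unif_fe _) hOcc
    (by rw [depth_AT]; exact hd)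
  rcases hlevel with hZ | hZ
  · exact absurd (hZ ▸ (st_both c1).2) (AT_not_hasFls _)
  · refine ⟨?_, hZ⟩
    have hne : (fe c1.den).subst .tru .tru ≠ fe c1.den := by
      intro he
      exact AT_not_hasFls _ (he ▸ (st_both c1).2)
    apply subst_cancel (depth_AT (fe c1.den)) hne
    have h' := h
    rw [fe_sor, fe_sor, ← hZ] at h'
    exact h'

lemma sand_ne_sor {s1 d1 s2 c2 : St A} (h1 : wfS (St.sand s1 d1)) (h2 : wfS (St.sor s2 c2))
    (h : fe (St.sand s1 d1).den = fe (St.sor s2 c2).den) : False := by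
  rcases le_or_gt (fe d1.den).depth (fe c2.den).depth with hle | hgt
  · have hOcc : Occ ((fe s1.den).subst (fe d1.den) ((fe d1.den).subst .fls .fls))
        ((fe c2.den).subst .tru .tru) := by
      rw [← fe_sand, h, fe_sor]
      exact occ_subst_of_hasTru _ _ (st_both s2).1
    rcases lt_or_eq_of_le hle with hlt | heq
    · obtain ⟨Y', hOy, ⟨l, b, r, hY'⟩, hT⟩ :=
        occ_subst_above (depth_AF (fe d1.den)).symm hOcc (by rw [depth_AT]; exact hlt)
      rcases total Y' with hY | hY
      · exact AT_not_hasFls (fe c2.den)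
          (occ_hasFls (hT ▸ occ_subst_of_hasTru _ _ hY) (st_both d1).2)
      · exact AT_not_hasFls (fe c2.den)
          (occ_hasFls (hT ▸ occ_subst_of_hasFls _ _ hY) (AF_hasFls _))
    · have hlevel := occ_subst_level (depth_AF (fe d1.den)).symm (unif_fe _)
        (unif_subst (unif_fe _) trivial trivial rfl) hOcc
        (by rw [depth_AT]; exact heq.symm)
      rcases hlevel with hZ | hZ
      · exact AT_not_hasFls (fe c2.den) (hZ ▸ (st_both d1).2)
      · exact AF_not_hasTru (fe d1.den) (hZ ▸ AT_hasTru (fe c2.den))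
  · have hOcc : Occ ((fe s2.den).subst ((fe c2.den).subst .tru .tru) (fe c2.den))
        ((fe d1.den).subst .fls .fls) := by
      rw [← fe_sor, ← h, fe_sand]
      exact occ_subst_of_hasFls _ _ (st_both s1).2
    obtain ⟨Y', hOy, ⟨l, b, r, hY'⟩, hT⟩ :=
      occ_subst_above (depth_AT (fe c2.den)) hOcc (by rw [depth_AT, depth_AF]; exact hgt)
    rcases total Y' with hY | hY
    · exact AF_not_hasTru (fe d1.den)
        (occ_hasTru (hT ▸ occ_subst_of_hasTru _ _ hY) (AT_hasTru _))
    · exact AF_not_hasTru (fe d1.den)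
        (occ_hasTru (hT ▸ occ_subst_of_hasFls _ _ hY) (st_both c2).1)

/-! ℓ-terms versus composite star terms -/

lemma pos_ne_sand {a : A} {w : List A} {s d : St A}
    (h : fe (St.pos a w).den = fe (St.sand s d).den) : False := by
  obtain ⟨SL, b, SR, hS⟩ := st_node s
  rw [fe_pos, fe_sand, hS, subst_node] at h
  injection h with h1 h2 h3
  exact allT_not_hasFls w (h1 ▸ hasFls_subst_of SL _ _ (st_both d).2 (AF_hasFls _))

lemma neg_ne_sand {a : A} {w : List A} {s d : St A}
    (h : fe (St.neg a w).den = fe (St.sand s d).den) : False := by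
  obtain ⟨SL, b, SR, hS⟩ := st_node s
  rw [fe_neg', fe_sand, hS, subst_node] at h
  injection h with h1 h2 h3
  exact allT_not_hasFls w (h3 ▸ hasFls_subst_of SR _ _ (st_both d).2 (AF_hasFls _))

lemma pos_ne_sor {a : A} {w : List A} {s c : St A}
    (h : fe (St.pos a w).den = fe (St.sor s c).den) : False := by
  obtain ⟨SL, b, SR, hS⟩ := st_node s
  rw [fe_pos, fe_sor, hS, subst_node] at h
  injection h with h1 h2 h3
  exact allF_not_hasTru w (h3 ▸ hasTru_subst_of SR _ _ (AT_hasTru _) (st_both c).1)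

lemma neg_ne_sor {a : A} {w : List A} {s c : St A}
    (h : fe (St.neg a w).den = fe (St.sor s c).den) : False := by
  obtain ⟨SL, b, SR, hS⟩ := st_node s
  rw [fe_neg', fe_sor, hS, subst_node] at h
  injection h with h1 h2 h3
  exact allF_not_hasTru w (h1 ▸ hasTru_subst_of SL _ _ (AT_hasTru _) (st_both c).1)

/-! #### Injectivity of `fe` on star terms and normal forms -/

theorem st_inj (s1 : St A) : ∀ s2 : St A, wfS s1 → wfS s2 →
    fe s1.den = fe s2.den → s1 = s2 := by
  induction s1 with
  | pos a w =>
      intro s2 w1 w2 h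
      cases s2 with
      | pos b v =>
          rw [fe_pos, fe_pos] at h
          injection h with h1 h2 h3
          rw [h2, allT_inj h1]
      | neg b v =>
          rw [fe_pos, fe_neg'] at h
          injection h with h1 h2 h3
          exact absurd (h1 ▸ allT_hasTru w) (allF_not_hasTru v)
      | sand s d => exact absurd h pos_ne_sand
      | sor s c => exact absurd h pos_ne_sor
  | neg a w =>
      intro s2 w1 w2 h
      cases s2 with
      | pos b v =>
          rw [fe_neg', fe_pos] at h
          injection h with h1 h2 h3
          exact absurd (h1.symm ▸ allT_hasTru v) (allF_not_hasTru w)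
      | neg b v =>
          rw [fe_neg', fe_neg'] at h
          injection h with h1 h2 h3
          rw [h2, allF_inj h1]
      | sand s d => exact absurd h neg_ne_sand
      | sor s c => exact absurd h neg_ne_sor
  | sand s d ihs ihd =>
      intro s2 w1 w2 h
      cases s2 with
      | pos b v => exact absurd h.symm pos_ne_sand
      | neg b v => exact absurd h.symm neg_ne_sand
      | sand s' d' =>
          obtain ⟨hS, hD⟩ := conj_unique w1 w2 h
          rw [ihs s' w1.1 w2.1 hS, ihd d' w1.2.1 w2.2.1 hD]
      | sor s' c' => exact (sand_ne_sor w1 w2 h).elim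
  | sor s c ihs ihc =>
      intro s2 w1 w2 h
      cases s2 with
      | pos b v => exact absurd h.symm pos_ne_sor
      | neg b v => exact absurd h.symm neg_ne_sor
      | sand s' d' => exact (sand_ne_sor w2 w1 h.symm).elim
      | sor s' c' =>
          obtain ⟨hS, hC⟩ := disj_unique w1 w2 h
          rw [ihs s' w1.1 w2.1 hS, ihc c' w1.2.1 w2.2.1 hC]

lemma fe_nf_ts (w : List A) (s : St A) :
    fe (NF.ts w s).den = graft w (fe s.den) := by
  show (fe (wT w)).subst (fe s.den) ((fe s.den).subst .fls .fls) = _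
  rw [fe_wT, subst_allT_graft]

lemma graft_star_inj : ∀ (w1 w2 : List A) (s1 s2 : St A), wfS s1 → wfS s2 →
    graft w1 (fe s1.den) = graft w2 (fe s2.den) → w1 = w2 ∧ fe s1.den = fe s2.den := by
  intro w1
  induction w1 with
  | nil =>
      intro w2 s1 s2 hw1 hw2 h
      cases w2 with
      | nil => exact ⟨rfl, h⟩
      | cons b v =>
          rw [graft_cons] at h
          exact (star_child_ne s1 hw1 (by rw [graft_nil] at h; exact h) rfl).elim
  | cons a w ih =>
      intro w2 s1 s2 hw1 hw2 h
      cases w2 with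
      | nil =>
          rw [graft_cons, graft_nil] at h
          exact (star_child_ne s2 hw2 h.symm rfl).elim
      | cons b v =>
          rw [graft_cons, graft_cons] at h
          injection h with h1 h2 h3
          obtain ⟨hw, hs⟩ := ih v s1 s2 hw1 hw2 h1
          rw [h2, hw]
          exact ⟨rfl, hs⟩

theorem nf_inj {N1 N2 : NF A} (h1 : wfN N1) (h2 : wfN N2)
    (h : fe N1.den = fe N2.den) : N1 = N2 := by
  have ht : ∀ w : List A, fe (NF.t w).den = allT w := fun w => fe_wT w
  have hf : ∀ w : List A, fe (NF.f w).den = allF w := fun w => fe_wF w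
  cases N1 with
  | t w =>
      cases N2 with
      | t v =>
          rw [ht, ht] at h
          rw [allT_inj h]
      | f v =>
          exfalso
          rw [ht, hf] at h
          exact allF_not_hasTru v (by rw [← h]; exact allT_hasTru w)
      | ts v s =>
          exfalso
          rw [ht, fe_nf_ts] at h
          exact allT_not_hasFls w (by rw [h]; exact (graft_hasFls v _).mpr (st_both s).2)
  | f w =>
      cases N2 with
      | t v =>
          exfalso
          rw [hf, ht] at h
          exact allF_not_hasTru w (by rw [h]; exact allT_hasTru v)
      | f v =>
          rw [hf, hf] at h
          rw [allF_inj h]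
      | ts v s =>
          exfalso
          rw [hf, fe_nf_ts] at h
          exact allF_not_hasTru w (by rw [h]; exact (graft_hasTru v _).mpr (st_both s).1)
  | ts w s =>
      cases N2 with
      | t v =>
          exfalso
          rw [fe_nf_ts, ht] at h
          exact allT_not_hasFls v (by rw [← h]; exact (graft_hasFls w _).mpr (st_both s).2)
      | f v =>
          exfalso
          rw [fe_nf_ts, hf] at h
          exact allF_not_hasTru v (by rw [← h]; exact (graft_hasTru w _).mpr (st_both s).1)
      | ts v s' =>
          rw [fe_nf_ts, fe_nf_ts] at h
          obtain ⟨hw, hs⟩ := graft_star_inj w v s s' h1 h2 h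
          rw [hw, st_inj s s' h1 h2 hs]

/-! #### Completeness -/

theorem complete (P Q : FTerm A) (h : fe P = fe Q) : EqFFEL P Q := by
  have hP := nf_sound P
  have hQ := nf_sound Q
  have hfe : fe (nf P).den = fe (nf Q).den := by
    rw [← fe_sound hP, ← fe_sound hQ]; exact h
  have heq := nf_inj (nf_wf P) (nf_wf Q) hfe
  exact hP.trans (by rw [heq]; exact hQ.symm)

end FFELAux
/-- completeness of EqFFEL for FFEL. -/
theorem eqffel_complete (A : Type) [Countable A] (P Q : FTerm A)
    (h : fe P = fe Q) : EqFFEL P Q :=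
  FFELAux.complete P Q h
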